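/- arXiv:1607.06127 — 7 statements merged into one kernel-verified Lean document; each statement's English description precedes it below -/
import Mathlib

section
/- Let X and Y be Banach spaces and let p ∈ [1,∞). If there exists a uniformly continuous almost uncollapsed map φ : X → Y, then there exists a uniformly continuous solvent map Φ : X → ℓ_p(Y), where ℓ_p(Y) is the Banach space of sequences (y_n) in Y with ∑_n ‖y_n‖^p < ∞ equipped with the norm (∑_n ‖y_n‖^p)^{1/p}. -/
open Metric
open scoped ENNReal NNReal

/-- Exact compression modulus. -/
noncomputable def exactComp {M N : Type*} [PseudoMetricSpace M] [PseudoMetricSpace N]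
    (f : M → N) (t : ℝ) : ℝ :=
  sInf {r : ℝ | ∃ x y : M, dist x y = t ∧ dist (f x) (f y) = r}

/-- Coarse map: the expansion modulus is finite for every t. -/
def Coarse {M N : Type*} [PseudoMetricSpace M] [PseudoMetricSpace N] (f : M → N) : Prop :=
  ∀ t : ℝ, ∃ C : ℝ, ∀ x y : M, dist x y ≤ t → dist (f x) (f y) ≤ C

/-- Solvent map. -/
def Solvent {M N : Type*} [PseudoMetricSpace M] [PseudoMetricSpace N] (f : M → N) : Prop :=
  ∀ n : ℕ, ∃ R : ℝ, 0 < R ∧ ∀ x y : M,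
    dist x y ∈ Set.Icc R (R + (n : ℝ)) → (n : ℝ) < dist (f x) (f y)

/-- Almost uncollapsed map. -/
noncomputable def AlmostUncollapsed {M N : Type*} [PseudoMetricSpace M] [PseudoMetricSpace N]
    (f : M → N) : Prop :=
  ∃ t : ℝ, 0 < t ∧ 0 < exactComp f t

open Filter Topology Set Uniformity

/-! Uniform continuity and `exactComp φ t = δ > 0` give a whole band: `‖φ x - φ y‖ ≥ δ / 2`
whenever `‖x - y‖ ∈ [t, t + η]` (walk distance `t` along the segment from `x` to `y`; the
remaining `≤ η` costs at most `δ / 2`). Rescaling, `F n x = c • (φ (μ • x) - φ 0)` for suitable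
`c, μ > 0` moves pairs at distance `≤ n + 1` by at most `2⁻ⁿ` and pairs at distance in
`[R n, R n + n + 1]` by at least `n + 1`. The bounds `2⁻ⁿ` put `(F n x)ₙ` in `ℓ_p(Y)` and, by
dominated convergence, make the resulting map uniformly continuous, while its `n`-th coordinate
alone witnesses solvency at scale `n`. -/

theorem exactComp_le_dist {M N : Type*} [PseudoMetricSpace M] [PseudoMetricSpace N]
    (f : M → N) {x y : M} : exactComp f (dist x y) ≤ dist (f x) (f y) :=
  csInf_le ⟨0, by rintro r ⟨x, y, -, rfl⟩; exact dist_nonneg⟩ ⟨x, y, rfl, rfl⟩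

theorem exists_dist_eq_and_dist_eq_sub {X : Type*} [NormedAddCommGroup X] [NormedSpace ℝ X]
    {x y : X} {t : ℝ} (ht : 0 ≤ t) (hty : t ≤ dist x y) :
    ∃ z, dist x z = t ∧ dist z y = dist x y - t := by
  rcases (dist_nonneg : 0 ≤ dist x y).eq_or_lt with hxy | hxy
  · obtain rfl : t = 0 := by linarith
    exact ⟨x, dist_self x, by simp⟩
  have hc : t / dist x y ∈ Icc (0 : ℝ) 1 := ⟨by positivity, div_le_one_of_le₀ hty dist_nonneg⟩
  refine ⟨AffineMap.lineMap x y (t / dist x y), ?_, ?_⟩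
  · rw [dist_comm, dist_lineMap_left, Real.norm_of_nonneg hc.1]
    field_simp
  · rw [dist_lineMap_right, Real.norm_of_nonneg (sub_nonneg.2 hc.2)]
    field_simp

theorem UniformContinuous.exists_half_le_dist_of_mem_Icc {X N : Type*} [NormedAddCommGroup X]
    [NormedSpace ℝ X] [PseudoMetricSpace N] {f : X → N} (hf : UniformContinuous f) {t δ : ℝ}
    (ht : 0 ≤ t) (hδ : 0 < δ) (hsep : ∀ x y, dist x y = t → δ ≤ dist (f x) (f y)) :
    ∃ η > 0, ∀ x y, dist x y ∈ Icc t (t + η) → δ / 2 ≤ dist (f x) (f y) := by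
  obtain ⟨η, hη, hfη⟩ := Metric.uniformContinuous_iff_le.1 hf (δ / 2) (half_pos hδ)
  refine ⟨η, hη, fun x y hxy => ?_⟩
  obtain ⟨z, hxz, hzy⟩ := exists_dist_eq_and_dist_eq_sub ht hxy.1
  have := hfη (by linarith [hxy.2] : dist z y ≤ η)
  linarith [hsep x z hxz, dist_triangle (f x) (f y) (f z), dist_comm (f z) (f y)]

theorem UniformContinuous.exists_rescaling {X Y : Type*} [NormedAddCommGroup X] [NormedSpace ℝ X]
    [NormedAddCommGroup Y] [NormedSpace ℝ Y] {φ : X → Y} (hφ : UniformContinuous φ)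
    {t η δ : ℝ} (ht : 0 < t) (hη : 0 < η) (hδ : 0 < δ)
    (hband : ∀ x y, dist x y ∈ Icc t (t + η) → δ ≤ dist (φ x) (φ y))
    {a ε : ℝ} (ha : 0 < a) (hε : 0 < ε) :
    ∃ R > 0, ∃ F : X → Y, UniformContinuous F ∧ F 0 = 0 ∧
      (∀ x y, dist x y ≤ a → dist (F x) (F y) ≤ ε) ∧
      ∀ x y, dist x y ∈ Icc R (R + a) → a ≤ dist (F x) (F y) := by
  obtain ⟨d, hd, hφd⟩ := Metric.uniformContinuous_iff_le.1 hφ (ε * δ / a) (by positivity)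
  set s := min d η
  have hs : 0 < s := lt_min hd hη
  set μ := s / a
  have hμ : 0 < μ := by positivity
  set F : X → Y := fun x => (a / δ) • (φ (μ • x) - φ 0)
  have hF : ∀ x y, dist (F x) (F y) = a / δ * dist (φ (μ • x)) (φ (μ • y)) := fun x y => by
    simp only [F, dist_smul₀, dist_sub_right, Real.norm_of_nonneg (by positivity : 0 ≤ a / δ)]
  have hμxy : ∀ x y : X, dist (μ • x) (μ • y) = μ * dist x y := fun x y => by
    rw [dist_smul₀, Real.norm_of_nonneg hμ.le]
  refine ⟨t / μ, by positivity, F,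
    ((hφ.comp (uniformContinuous_const_smul μ)).sub uniformContinuous_const).const_smul _,
    by simp [F], fun x y hxy => ?_, fun x y hxy => ?_⟩
  · have : dist (μ • x) (μ • y) ≤ d := by
      rw [hμxy]
      calc μ * dist x y ≤ μ * a := by gcongr
        _ = s := by simp only [μ]; field_simp
        _ ≤ d := min_le_left _ _
    calc dist (F x) (F y) ≤ a / δ * (ε * δ / a) := by rw [hF]; gcongr; exact hφd this
      _ = ε := by field_simp
  · have : dist (μ • x) (μ • y) ∈ Icc t (t + η) := by
      rw [hμxy]
      constructor
      · calc t = μ * (t / μ) := by field_simp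
          _ ≤ μ * dist x y := by gcongr; exact hxy.1
      · calc μ * dist x y ≤ μ * (t / μ + a) := by gcongr; exact hxy.2
          _ = t + s := by simp only [μ]; field_simp
          _ ≤ t + η := by gcongr; exact min_le_right _ _
    calc a = a / δ * δ := by field_simp
      _ ≤ dist (F x) (F y) := by rw [hF]; gcongr; exact hband _ _ this

theorem lp.uniformContinuous_of_dominated {ι M : Type*} {E : ι → Type*} [UniformSpace M]
    [∀ i, NormedAddCommGroup (E i)] {p : ℝ≥0∞} [Fact (1 ≤ p)] (hp : p ≠ ⊤)
    {Φ : M → lp E p} (hΦ : ∀ i, UniformContinuous fun x => Φ x i) {b : ι → ℝ} (hb : Summable b)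
    (hΦb : ∀ᶠ xy in 𝓤 M, ∀ i, ‖Φ xy.1 i - Φ xy.2 i‖ ^ p.toReal ≤ b i) :
    UniformContinuous Φ := by
  have hq : 0 < p.toReal := ENNReal.toReal_pos (zero_lt_one.trans_le Fact.out).ne' hp
  rw [UniformContinuous, tendsto_uniformity_iff_dist_tendsto_zero]
  have hsum : Tendsto (fun xy : M × M => ∑' i, ‖Φ xy.1 i - Φ xy.2 i‖ ^ p.toReal) (𝓤 M)
      (𝓝 0) := by
    have := tendsto_tsum_of_dominated_convergence
      (f := fun (xy : M × M) i => ‖Φ xy.1 i - Φ xy.2 i‖ ^ p.toReal) (g := fun _ => 0) hb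
      (fun i => ?_) (hΦb.mono fun xy h i => ?_)
    · simpa using this
    · have := (tendsto_uniformity_iff_dist_tendsto_zero.1 (hΦ i)).rpow_const (p := p.toReal)
        (Or.inr hq.le)
      simpa [Real.zero_rpow hq.ne', dist_eq_norm] using this
    · rw [Real.norm_of_nonneg (by positivity)]; exact h i
  have := hsum.rpow_const (p := 1 / p.toReal) (Or.inr (by positivity))
  rw [Real.zero_rpow (by positivity)] at this
  refine this.congr fun xy => ?_
  rw [dist_eq_norm, lp.norm_eq_tsum_rpow hq]
  rfl

theorem exists_uniformContinuous_lp_of_dist_le {M E : Type*} [PseudoMetricSpace M]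
    [NormedAddCommGroup E] {p : ℝ≥0∞} [Fact (1 ≤ p)] (hp : p ≠ ⊤) {F : ℕ → M → E} {b : ℕ → ℝ}
    (hb : Memℓp b p) (x₀ : M) (hF₀ : ∀ n, F n x₀ = 0)
    (hF : ∀ n, UniformContinuous (F n))
    (hFb : ∀ (n : ℕ) x y, dist x y ≤ n + 1 → dist (F n x) (F n y) ≤ b n) :
    ∃ Φ : M → lp (fun _ : ℕ => E) p, UniformContinuous Φ ∧ ∀ x n, Φ x n = F n x := by
  have hq : 0 < p.toReal := ENNReal.toReal_pos (zero_lt_one.trans_le Fact.out).ne' hp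
  have hbound : ∀ (n : ℕ) x y, dist x y ≤ n + 1 →
      ‖F n x - F n y‖ ^ p.toReal ≤ ‖b n‖ ^ p.toReal := fun n x y h => by
    rw [← dist_eq_norm]
    exact Real.rpow_le_rpow dist_nonneg ((hFb n x y h).trans (Real.le_norm_self _)) hq.le
  have hmem : ∀ x, Memℓp (fun n => F n x) p := fun x => by
    refine memℓp_gen ((hb.summable hq).of_norm_bounded_eventually_nat ?_)
    filter_upwards [eventually_ge_atTop ⌈dist x x₀⌉₊] with n hn
    rw [Real.norm_of_nonneg (by positivity), ← sub_zero (F n x), ← hF₀ n]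
    refine hbound n x x₀ ((Nat.ceil_le.1 hn).trans ?_)
    linarith
  refine ⟨fun x => ⟨_, hmem x⟩,
    lp.uniformContinuous_of_dominated hp hF (hb.summable hq) ?_, fun _ _ => rfl⟩
  filter_upwards [Metric.dist_mem_uniformity one_pos] with xy h n
  exact hbound n _ _ (by linarith [h.le, (n.cast_nonneg : (0 : ℝ) ≤ n)])

theorem exists_uniformContinuous_solvent_into_lp_general
    {X Y : Type*} [NormedAddCommGroup X] [NormedSpace ℝ X]
    [NormedAddCommGroup Y] [NormedSpace ℝ Y]
    (p : ℝ≥0∞) [Fact (1 ≤ p)] (hp : p ≠ ⊤)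
    (φ : X → Y) (hφ : UniformContinuous φ) (hu : AlmostUncollapsed φ) :
    ∃ Φ : X → lp (fun _ : ℕ => Y) p, UniformContinuous Φ ∧ Solvent Φ := by
  obtain ⟨t, ht, hδ⟩ := hu
  obtain ⟨η, hη, hband⟩ := hφ.exists_half_le_dist_of_mem_Icc ht.le hδ
    fun x y hxy => hxy ▸ exactComp_le_dist φ
  choose R hR F hF hF₀ hFsmall hFlarge using fun n : ℕ =>
    hφ.exists_rescaling ht hη (half_pos hδ) hband (a := n + 1) (ε := (1 / 2) ^ n)
      (by positivity) (by positivity)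
  have hgeom : Memℓp (fun n : ℕ => (1 / 2 : ℝ) ^ n) p :=
    (memℓp_gen (p := 1) (by simpa using summable_geometric_two)).of_exponent_ge Fact.out
  obtain ⟨Φ, hΦ, hΦF⟩ := exists_uniformContinuous_lp_of_dist_le hp hgeom 0 hF₀ hF hFsmall
  refine ⟨Φ, hΦ, fun n => ⟨R n, hR n, fun x y hxy => ?_⟩⟩
  calc (n : ℝ) < n + 1 := lt_add_one _
    _ ≤ dist (F n x) (F n y) := hFlarge n x y ⟨hxy.1, hxy.2.trans (by linarith)⟩
    _ = ‖(Φ x - Φ y) n‖ := by rw [dist_eq_norm, lp.coeFn_sub, Pi.sub_apply, hΦF, hΦF]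
    _ ≤ ‖Φ x - Φ y‖ := lp.norm_apply_le_norm (zero_lt_one.trans_le Fact.out).ne' _ n
    _ = dist (Φ x) (Φ y) := (dist_eq_norm ..).symm

/-- If there is a uniformly continuous almost uncollapsed map φ : X → Y, then there is a
uniformly continuous solvent map Φ : X → ℓ_p(Y), for p ∈ [1,∞). -/
theorem exists_uniformContinuous_solvent_into_lp
    {X Y : Type*} [NormedAddCommGroup X] [NormedSpace ℝ X] [CompleteSpace X]
    [NormedAddCommGroup Y] [NormedSpace ℝ Y] [CompleteSpace Y]
    (p : ℝ≥0∞) [Fact (1 ≤ p)] (hp : p ≠ ⊤)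
    (φ : X → Y) (hφ : UniformContinuous φ) (hu : AlmostUncollapsed φ) :
    ∃ Φ : X → lp (fun _ : ℕ => Y) p, UniformContinuous Φ ∧ Solvent Φ :=
  exists_uniformContinuous_solvent_into_lp_general p hp φ hφ hu
end

section
/- Define b : ℝ → ℓ_2(ℕ,ℂ) by b(t) = (1 − exp(2πi t / 2^{2^n}))_{n∈ℕ}. Then b is well defined (b(t) ∈ ℓ_2(ℕ,ℂ) for every t ∈ ℝ), satisfies ‖b(t) − b(s)‖ = ‖b(t−s)‖ for all s,t ∈ ℝ, is Lipschitz, is solvent, and is collapsed, i.e., for every t > 0, inf{‖b(x) − b(y)‖ : x,y ∈ ℝ, |x−y| ≥ t} = 0. -/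
set_option maxHeartbeats 1000000


open Metric
open scoped ENNReal NNReal

noncomputable section CocycleAux

namespace CocycleAux

/-- The coordinate functions. -/
def phi (t : ℝ) (n : ℕ) : ℂ := 1 - Complex.exp (2 * Real.pi * Complex.I * (t : ℂ) / 2 ^ 2 ^ n)

/-- The phase. -/
def th (t : ℝ) (n : ℕ) : ℝ := 2 * Real.pi * t / 2 ^ 2 ^ n

lemma phi_eq (t : ℝ) (n : ℕ) : phi t n = 1 - Complex.exp ((th t n : ℂ) * Complex.I) := by
  unfold phi th
  congr 2
  push_cast
  ring

lemma th_sub (t s : ℝ) (n : ℕ) : th (t - s) n = th t n - th s n := by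
  unfold th; ring

lemma th_neg (t : ℝ) (n : ℕ) : th (-t) n = -(th t n) := by
  unfold th; ring

lemma norm_one_sub_exp (x : ℝ) :
    ‖1 - Complex.exp ((x : ℂ) * Complex.I)‖ = Real.sqrt (2 - 2 * Real.cos x) := by
  rw [Complex.norm_def, Complex.normSq_apply]
  congr 1
  have h1 : (1 - Complex.exp ((x : ℂ) * Complex.I)).re = 1 - Real.cos x := by
    simp [Complex.sub_re, Complex.exp_ofReal_mul_I_re]
  have h2 : (1 - Complex.exp ((x : ℂ) * Complex.I)).im = -Real.sin x := by
    simp [Complex.sub_im, Complex.exp_ofReal_mul_I_im]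
  rw [h1, h2]
  have := Real.sin_sq_add_cos_sq x
  nlinarith [this]

lemma norm_phi (t : ℝ) (n : ℕ) : ‖phi t n‖ = Real.sqrt (2 - 2 * Real.cos (th t n)) := by
  rw [phi_eq, norm_one_sub_exp]

lemma cos_le_one' (x : ℝ) : 0 ≤ 2 - 2 * Real.cos x := by
  nlinarith [Real.cos_le_one x]

lemma normsq_phi (t : ℝ) (n : ℕ) : ‖phi t n‖ ^ 2 = 2 - 2 * Real.cos (th t n) := by
  rw [norm_phi, Real.sq_sqrt (cos_le_one' _)]

lemma two_sub_cos_le_sq (x : ℝ) : 2 - 2 * Real.cos x ≤ x ^ 2 := by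
  have h := Real.abs_sin_half x
  have h2 : Real.sin (x / 2) ^ 2 = (1 - Real.cos x) / 2 := by
    rw [← sq_abs, h, Real.sq_sqrt]
    nlinarith [Real.cos_le_one x]
  have h3 : Real.sin (x / 2) ^ 2 ≤ (x / 2) ^ 2 := Real.sin_sq_le_sq
  nlinarith

lemma normsq_phi_le (t : ℝ) (n : ℕ) : ‖phi t n‖ ^ 2 ≤ (th t n) ^ 2 := by
  rw [normsq_phi]; exact two_sub_cos_le_sq _

lemma th_sq_le (t : ℝ) (n : ℕ) : (th t n) ^ 2 ≤ (2 * Real.pi * t) ^ 2 * (1 / 4 : ℝ) ^ n := by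
  unfold th
  rw [div_pow]
  have h1 : ((2 : ℝ) ^ 2 ^ n) ^ 2 = (4 : ℝ) ^ 2 ^ n := by
    rw [← pow_mul, pow_mul']; norm_num
  rw [h1, div_eq_mul_inv]
  have h2 : ((4 : ℝ) ^ 2 ^ n)⁻¹ = (1 / 4 : ℝ) ^ 2 ^ n := by
    rw [one_div, inv_pow]
  rw [h2]
  have h3 : (1 / 4 : ℝ) ^ 2 ^ n ≤ (1 / 4 : ℝ) ^ n :=
    pow_le_pow_of_le_one (by norm_num) (by norm_num) (Nat.le_of_lt (Nat.lt_two_pow_self (n := n)))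
  nlinarith [sq_nonneg (2 * Real.pi * t), pow_nonneg (by norm_num : (0:ℝ) ≤ 1/4) (2 ^ n)]

lemma summable_geom_mul (C : ℝ) : Summable (fun n : ℕ => C * (1 / 4 : ℝ) ^ n) :=
  (summable_geometric_of_lt_one (by norm_num) (by norm_num)).mul_left C

lemma summable_sq (t : ℝ) : Summable (fun n => ‖phi t n‖ ^ 2) := by
  apply Summable.of_nonneg_of_le (fun n => sq_nonneg _) (fun n => ?_)
    (summable_geom_mul ((2 * Real.pi * t) ^ 2))
  exact (normsq_phi_le t n).trans (th_sq_le t n)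

lemma mem_l2 (t : ℝ) : Memℓp (phi t) 2 := by
  apply memℓp_gen
  have h : (2 : ℝ≥0∞).toReal = 2 := by norm_num
  rw [h]
  have : ∀ n, ‖phi t n‖ ^ (2 : ℝ) = ‖phi t n‖ ^ (2 : ℕ) := fun n => by
    rw [← Real.rpow_natCast]; norm_num
  simpa only [this] using summable_sq t

/-- The cocycle. -/
def B (t : ℝ) : lp (fun _ : ℕ => ℂ) 2 := ⟨phi t, mem_l2 t⟩

lemma B_apply (t : ℝ) (n : ℕ) : (B t : ∀ _ : ℕ, ℂ) n = phi t n := rfl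

lemma norm_sq_eq (f : lp (fun _ : ℕ => ℂ) 2) : ‖f‖ ^ 2 = ∑' n, ‖(f : ∀ _ : ℕ, ℂ) n‖ ^ 2 := by
  have h := lp.norm_rpow_eq_tsum (p := 2) (by norm_num) f
  have h2 : (2 : ℝ≥0∞).toReal = 2 := by norm_num
  rw [h2] at h
  have e : ∀ x : ℝ, 0 ≤ x → x ^ (2 : ℝ) = x ^ (2 : ℕ) := fun x hx => by
    rw [← Real.rpow_natCast]; norm_num
  rw [← e _ (norm_nonneg f)]
  rw [h]
  exact tsum_congr fun n => e _ (norm_nonneg _)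

-- NEW PART
lemma norm_phi_sub (t s : ℝ) (n : ℕ) : ‖phi t n - phi s n‖ = ‖phi (t - s) n‖ := by
  rw [phi_eq t n, phi_eq s n, phi_eq (t - s) n]
  have key : (1 - Complex.exp ((th t n : ℂ) * Complex.I)) - (1 - Complex.exp ((th s n : ℂ) * Complex.I))
      = Complex.exp ((th s n : ℂ) * Complex.I) * (1 - Complex.exp ((th (t - s) n : ℂ) * Complex.I)) := by
    rw [th_sub]
    rw [mul_sub, mul_one, ← Complex.exp_add]
    push_cast
    ring_nf
  rw [key, norm_mul, Complex.norm_exp_ofReal_mul_I, one_mul]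

lemma norm_B_sub (s t : ℝ) : ‖B t - B s‖ = ‖B (t - s)‖ := by
  have h1 : ‖B t - B s‖ ^ 2 = ‖B (t - s)‖ ^ 2 := by
    rw [norm_sq_eq, norm_sq_eq]
    apply tsum_congr fun n => ?_
    have : ((B t - B s : lp (fun _ : ℕ => ℂ) 2) : ∀ _ : ℕ, ℂ) n = phi t n - phi s n := by
      rw [lp.coeFn_sub]; simp [B_apply]
    rw [this, B_apply, norm_phi_sub]
  have h2 : (0:ℝ) ≤ ‖B t - B s‖ := norm_nonneg _
  have h3 : (0:ℝ) ≤ ‖B (t - s)‖ := norm_nonneg _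
  nlinarith

lemma norm_B_neg (t : ℝ) : ‖B (-t)‖ = ‖B t‖ := by
  have h1 : ‖B (-t)‖ ^ 2 = ‖B t‖ ^ 2 := by
    rw [norm_sq_eq, norm_sq_eq]
    apply tsum_congr fun n => ?_
    rw [B_apply, B_apply, normsq_phi, normsq_phi, th_neg, Real.cos_neg]
  nlinarith [norm_nonneg (B (-t)), norm_nonneg (B t)]

lemma norm_B_le (t : ℝ) : ‖B t‖ ≤ 4 * Real.pi * |t| := by
  have h1 : ‖B t‖ ^ 2 ≤ (2 * Real.pi * t) ^ 2 * (4 / 3) := by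
    rw [norm_sq_eq]
    have hle : ∀ n : ℕ, ‖(B t : ∀ _ : ℕ, ℂ) n‖ ^ 2 ≤ (2 * Real.pi * t) ^ 2 * (1/4:ℝ) ^ n := by
      intro n; rw [B_apply]; exact (normsq_phi_le t n).trans (th_sq_le t n)
    have := Summable.tsum_le_tsum hle (by simpa only [B_apply] using summable_sq t)
      (summable_geom_mul ((2 * Real.pi * t) ^ 2))
    calc ∑' n, ‖(B t : ∀ _ : ℕ, ℂ) n‖ ^ 2 ≤ ∑' n : ℕ, (2 * Real.pi * t) ^ 2 * (1/4:ℝ) ^ n := this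
      _ = (2 * Real.pi * t) ^ 2 * (4/3) := by
          rw [tsum_mul_left, tsum_geometric_of_lt_one (by norm_num) (by norm_num)]
          norm_num
  have hpi := Real.pi_pos
  have hb : (0:ℝ) ≤ 4 * Real.pi * |t| := by positivity
  have h2 : ‖B t‖ ^ 2 ≤ (4 * Real.pi * |t|) ^ 2 := by
    have he : (4 * Real.pi * |t|) ^ 2 = 16 * (Real.pi * t) ^ 2 := by
      rw [mul_pow, mul_pow, sq_abs]; ring
    rw [he]
    nlinarith [sq_nonneg (Real.pi * t)]
  exact (pow_le_pow_iff_left₀ (norm_nonneg _) hb (by norm_num)).mp h2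

lemma lipschitz_B : LipschitzWith (Real.toNNReal (4 * Real.pi)) B := by
  apply LipschitzWith.of_dist_le_mul
  intro x y
  rw [dist_eq_norm, norm_B_sub, Real.dist_eq, Real.coe_toNNReal _ (by positivity)]
  exact norm_B_le _

lemma sum_pow_lt (j : ℕ) : ∑ k ∈ Finset.range j, 2 ^ (2 ^ k - 1) < 2 ^ (2 ^ j - 1) := by
  induction j with
  | zero => simp
  | succ j ih =>
    rw [Finset.sum_range_succ]
    have h1 : (2:ℕ) ^ (2 ^ j - 1) + 2 ^ (2 ^ j - 1) = 2 ^ (2 ^ j) := by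
      have : (2:ℕ) ^ (2 ^ j) = 2 ^ (2 ^ j - 1 + 1) := by
        congr 1
        have := Nat.one_le_two_pow (n := j)
        omega
      rw [this, pow_succ]
      omega
    have h2 : (2:ℕ) ^ (2 ^ j) ≤ 2 ^ (2 ^ (j + 1) - 1) := by
      apply Nat.pow_le_pow_right (by norm_num)
      have : 2 ^ (j+1) = 2 * 2 ^ j := by ring
      have := Nat.one_le_two_pow (n := j)
      omega
    omega

lemma eight_sum_le {j : ℕ} (hj : 3 ≤ j) :
    8 * ∑ k ∈ Finset.range j, 2 ^ (2 ^ k - 1) ≤ 2 ^ (2 ^ j) := by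
  obtain ⟨i, rfl⟩ : ∃ i, j = i + 1 := ⟨j - 1, by omega⟩
  have hi : 2 ≤ i := by omega
  rw [Finset.sum_range_succ]
  have h1 := sum_pow_lt i
  have h2 : (2:ℕ) ^ (2 ^ i - 1) + 2 ^ (2 ^ i - 1) = 2 ^ (2 ^ i) := by
    have : (2:ℕ) ^ (2 ^ i) = 2 ^ (2 ^ i - 1 + 1) := by
      congr 1
      have := Nat.one_le_two_pow (n := i)
      omega
    rw [this, pow_succ]; omega
  -- 8 * (sum + 2^(2^i-1)) ≤ 8 * 2^(2^i) = 2^(2^i + 3) ≤ 2^(2^(i+1))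
  have h3 : (2:ℕ) ^ (2 ^ i + 3) ≤ 2 ^ (2 ^ (i + 1)) := by
    apply Nat.pow_le_pow_right (by norm_num)
    have h4 : (3:ℕ) ≤ 2 ^ i := by
      calc (3:ℕ) ≤ 2 ^ 2 := by norm_num
      _ ≤ 2 ^ i := Nat.pow_le_pow_right (by norm_num) hi
    have : 2 ^ (i+1) = 2 * 2 ^ i := by ring
    omega
  have h5 : (2:ℕ) ^ (2 ^ i + 3) = 8 * 2 ^ (2 ^ i) := by
    rw [pow_add]; ring
  omega

lemma eight_n_le {n j : ℕ} (hj : n + 3 ≤ j) : 8 * n ≤ 2 ^ (2 ^ j) := by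
  have h1 : j ≤ 2 ^ j := Nat.le_of_lt (Nat.lt_two_pow_self (n := j))
  have h2 : (2:ℕ) ^ j ≤ 2 ^ (2 ^ j) := Nat.pow_le_pow_right (by norm_num) h1
  have h3 : (2:ℕ) ^ (n + 3) ≤ 2 ^ j := Nat.pow_le_pow_right (by norm_num) hj
  have h4 : n ≤ 2 ^ n := Nat.le_of_lt (Nat.lt_two_pow_self (n := n))
  have h5 : (2:ℕ) ^ (n+3) = 8 * 2 ^ n := by rw [pow_add]; ring
  omega

lemma decomp {j₀ m j : ℕ} (h1 : j₀ ≤ j) (h2 : j ≤ m) :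
    ∃ A E : ℕ, (∑ k ∈ Finset.Icc j₀ m, 2 ^ (2 ^ k - 1)) = E + 2 ^ (2 ^ j - 1) + A * 2 ^ (2 ^ j)
      ∧ E ≤ ∑ k ∈ Finset.range j, 2 ^ (2 ^ k - 1) := by
  refine ⟨∑ k ∈ Finset.Ico (j+1) (m+1), 2 ^ (2 ^ k - 1 - 2 ^ j),
    ∑ k ∈ Finset.Ico j₀ j, 2 ^ (2 ^ k - 1), ?_, ?_⟩
  · have hsplit : (∑ k ∈ Finset.Icc j₀ m, 2 ^ (2 ^ k - 1))
        = (∑ k ∈ Finset.Ico j₀ j, 2 ^ (2 ^ k - 1)) + ∑ k ∈ Finset.Ico j (m+1), 2 ^ (2 ^ k - 1) := by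
      rw [← Finset.Ico_add_one_right_eq_Icc]
      rw [Finset.sum_Ico_consecutive _ h1 (by omega)]
    rw [hsplit, Finset.sum_eq_sum_Ico_succ_bot (by omega : j < m + 1)]
    have hA : (∑ k ∈ Finset.Ico (j+1) (m+1), 2 ^ (2 ^ k - 1 - 2 ^ j)) * 2 ^ (2 ^ j)
        = ∑ k ∈ Finset.Ico (j+1) (m+1), 2 ^ (2 ^ k - 1) := by
      rw [Finset.sum_mul]
      apply Finset.sum_congr rfl
      intro k hk
      rw [← pow_add]
      congr 1
      simp only [Finset.mem_Ico] at hk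
      have hk1 : 2 ^ (j+1) ≤ 2 ^ k := Nat.pow_le_pow_right (by norm_num) hk.1
      have : 2 ^ (j+1) = 2 * 2 ^ j := by ring
      have := Nat.one_le_two_pow (n := j)
      omega
    rw [hA]
    ring
  · apply Finset.sum_le_sum_of_subset
    intro k hk
    simp only [Finset.mem_Ico, Finset.mem_range] at *
    omega

-- NEW
lemma cos_th_nonpos {n j₀ m j : ℕ} (hj0 : n + 3 ≤ j₀) (h1 : j₀ ≤ j) (h2 : j ≤ m)
    {u : ℝ} (hu1 : ((∑ k ∈ Finset.Icc j₀ m, 2 ^ (2 ^ k - 1) : ℕ) : ℝ) ≤ u)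
    (hu2 : u ≤ ((∑ k ∈ Finset.Icc j₀ m, 2 ^ (2 ^ k - 1) : ℕ) : ℝ) + n) :
    Real.cos (th u j) ≤ 0 := by
  obtain ⟨A, E, hNE, hEle⟩ := decomp h1 h2
  have hE8 : 8 * E ≤ 2 ^ (2 ^ j) :=
    le_trans (by omega) (eight_sum_le (by omega : 3 ≤ j))
  have h8n : 8 * n ≤ 2 ^ (2 ^ j) := eight_n_le (by omega)
  set N : ℕ := ∑ k ∈ Finset.Icc j₀ m, 2 ^ (2 ^ k - 1) with hN
  have hpow : (2:ℕ) ^ (2 ^ j) = 2 * 2 ^ (2 ^ j - 1) := by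
    have h := Nat.one_le_two_pow (n := j)
    rw [← pow_succ']
    congr 1
    omega
  set P : ℝ := (2:ℝ) ^ (2 ^ j) with hP
  have hPpos : (0:ℝ) < P := by positivity
  have hNr : (N:ℝ) = (E:ℝ) + (2:ℝ) ^ (2 ^ j - 1) + (A:ℝ) * P := by
    rw [hP]; exact_mod_cast hNE
  have hhalf : (2:ℝ) ^ (2 ^ j) = 2 * (2:ℝ) ^ (2 ^ j - 1) := by
    exact_mod_cast hpow
  set s : ℝ := u - N with hs
  have hs0 : 0 ≤ s := by simp [hs]; linarith
  have hsn : s ≤ n := by simp [hs]; linarith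
  set ε : ℝ := ((E:ℝ) + s) / P with hε
  have hε0 : 0 ≤ ε := div_nonneg (by positivity) hPpos.le
  have hε4 : ε ≤ 1 / 4 := by
    rw [hε, div_le_iff₀ hPpos]
    have hE8' : (8:ℝ) * E ≤ P := by rw [hP]; exact_mod_cast hE8
    have h8n' : (8:ℝ) * n ≤ P := by rw [hP]; exact_mod_cast h8n
    linarith
  have key : th u j = (2 * Real.pi * ε + Real.pi) + ((A:ℤ):ℝ) * (2 * Real.pi) := by
    have hu : u = (E:ℝ) + (2:ℝ) ^ (2 ^ j - 1) + (A:ℝ) * P + s := by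
      rw [← hNr]; simp [hs]
    unfold th
    push_cast
    rw [hu, hε]
    rw [← hP]
    field_simp
    ring_nf
    rw [hP, hhalf]
    ring
  rw [key, Real.cos_add_int_mul_two_pi, Real.cos_add_pi]
  simp only [neg_nonpos]
  apply Real.cos_nonneg_of_mem_Icc
  constructor
  · have := Real.pi_pos; nlinarith
  · have := Real.pi_pos; nlinarith

lemma solvent_B : Solvent B := by
  intro n
  set j₀ : ℕ := n + 3 with hj₀
  set m : ℕ := n ^ 2 + n + 3 with hm
  set N : ℕ := ∑ k ∈ Finset.Icc j₀ m, 2 ^ (2 ^ k - 1) with hN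
  have hj0m : j₀ ≤ m := by omega
  have hNpos : 0 < N := by
    apply Finset.sum_pos (fun k _ => by positivity)
    exact ⟨j₀, Finset.mem_Icc.mpr ⟨le_refl _, hj0m⟩⟩
  refine ⟨(N:ℝ), by exact_mod_cast hNpos, ?_⟩
  have main : ∀ u : ℝ, (N:ℝ) ≤ u → u ≤ (N:ℝ) + n → (n:ℝ) < ‖B u‖ := by
    intro u hu1 hu2
    have hsum : ∀ j ∈ Finset.Icc j₀ m, (2:ℝ) ≤ ‖phi u j‖ ^ 2 := by
      intro j hj
      rw [Finset.mem_Icc] at hj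
      have := cos_th_nonpos (n := n) (by omega) hj.1 hj.2 hu1 hu2
      rw [normsq_phi]
      linarith
    have hfin : ∑ j ∈ Finset.Icc j₀ m, ‖phi u j‖ ^ 2 ≤ ‖B u‖ ^ 2 := by
      rw [norm_sq_eq]
      simp only [B_apply]
      exact Summable.sum_le_tsum _ (fun i _ => sq_nonneg _) (summable_sq u)
    have hcard : (Finset.Icc j₀ m).card = n ^ 2 + 1 := by
      rw [Nat.card_Icc]; omega
    have hlow : (2:ℝ) * (n ^ 2 + 1) ≤ ∑ j ∈ Finset.Icc j₀ m, ‖phi u j‖ ^ 2 := by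
      calc (2:ℝ) * (n ^ 2 + 1) = ∑ _j ∈ Finset.Icc j₀ m, (2:ℝ) := by
            rw [Finset.sum_const, hcard]; push_cast; ring
        _ ≤ _ := Finset.sum_le_sum hsum
    have hn2 : ((n:ℝ)) ^ 2 < ‖B u‖ ^ 2 := by
      have : ((n:ℝ)) ^ 2 + 1 ≤ (n^2 + 1 : ℕ) := by push_cast; linarith
      nlinarith
    nlinarith [norm_nonneg (B u), Nat.cast_nonneg (α := ℝ) n]
  intro x y hxy
  rw [Set.mem_Icc, Real.dist_eq] at hxy
  have h1 : ‖B x - B y‖ = ‖B (x - y)‖ := norm_B_sub y x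
  rw [dist_eq_norm, h1]
  rcases abs_cases (x - y) with ⟨habs, _⟩ | ⟨habs, _⟩
  · exact main _ (habs ▸ hxy.1) (habs ▸ hxy.2)
  · rw [← norm_B_neg]
    have : -(x - y) = |x - y| := by rw [habs]
    rw [this]
    exact main _ hxy.1 hxy.2

-- NEW
lemma phi_dyadic_zero {m j : ℕ} (hj : j ≤ m) :
    ‖phi (((2 ^ 2 ^ m : ℕ) : ℝ)) j‖ ^ 2 = 0 := by
  have hd : (2:ℕ) ^ 2 ^ m = 2 ^ (2 ^ m - 2 ^ j) * 2 ^ 2 ^ j := by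
    rw [← pow_add]
    congr 1
    have : (2:ℕ) ^ j ≤ 2 ^ m := Nat.pow_le_pow_right (by norm_num) hj
    omega
  have hth : th (((2 ^ 2 ^ m : ℕ) : ℝ)) j = ((2 ^ (2 ^ m - 2 ^ j) : ℕ) : ℝ) * (2 * Real.pi) := by
    unfold th
    have hx : ((2 ^ 2 ^ m : ℕ) : ℝ) = ((2 ^ (2 ^ m - 2 ^ j) : ℕ) : ℝ) * (2:ℝ) ^ 2 ^ j := by
      push_cast
      exact_mod_cast congrArg (Nat.cast : ℕ → ℝ) hd
    rw [hx]
    field_simp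
  rw [normsq_phi, hth, Real.cos_nat_mul_two_pi]
  ring

lemma tail_exp_le (m i : ℕ) : 2 ^ m + i ≤ 2 ^ (i + (m + 1)) - 2 ^ m := by
  have h1 : (2:ℕ) ^ (i + (m + 1)) = 2 ^ (m+1) * 2 ^ i := by rw [pow_add]; ring
  have h2 : i + 1 ≤ 2 ^ i := Nat.lt_two_pow_self
  have h3 : 2 ^ m + i + 2 ^ m ≤ 2 ^ (m + 1) * 2 ^ i := by
    have ha : 1 ≤ 2 ^ m := Nat.one_le_two_pow
    have hb : 2 ^ (m + 1) = 2 * 2 ^ m := by ring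
    nlinarith
  omega

lemma phi_dyadic_tail (m i : ℕ) :
    ‖phi (((2 ^ 2 ^ m : ℕ) : ℝ)) (i + (m + 1))‖ ^ 2
      ≤ (4 * Real.pi ^ 2 * (1/4 : ℝ) ^ 2 ^ m) * (1/4 : ℝ) ^ i := by
  set j := i + (m + 1) with hj
  have hjm : 2 ^ m ≤ 2 ^ j := Nat.pow_le_pow_right (by norm_num) (by omega)
  set d := 2 ^ j - 2 ^ m with hd
  have hd2 : (2:ℕ) ^ 2 ^ j = 2 ^ 2 ^ m * 2 ^ d := by
    rw [← pow_add]; congr 1; omega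
  have hratio : ((2 ^ 2 ^ m : ℕ) : ℝ) / (2:ℝ) ^ 2 ^ j = (1/2 : ℝ) ^ d := by
    have h2 : ((2:ℝ)) ^ 2 ^ j = ((2 ^ 2 ^ m : ℕ) : ℝ) * (2:ℝ) ^ d := by
      push_cast
      exact_mod_cast congrArg (Nat.cast : ℕ → ℝ) hd2
    rw [h2, one_div, inv_pow]
    rw [div_eq_iff (by positivity)]
    field_simp
  have hth : (th (((2 ^ 2 ^ m : ℕ) : ℝ)) j) ^ 2 = 4 * Real.pi ^ 2 * (1/4 : ℝ) ^ d := by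
    unfold th
    rw [mul_div_assoc, hratio]
    rw [mul_pow]
    have : ((1/2 : ℝ) ^ d) ^ 2 = (1/4 : ℝ) ^ d := by
      rw [← pow_mul, pow_mul']
      norm_num
    rw [this]
    ring
  have hdge : 2 ^ m + i ≤ d := by rw [hd, hj]; exact tail_exp_le m i
  have hmono : (1/4 : ℝ) ^ d ≤ (1/4 : ℝ) ^ (2 ^ m + i) :=
    pow_le_pow_of_le_one (by norm_num) (by norm_num) hdge
  calc ‖phi (((2 ^ 2 ^ m : ℕ) : ℝ)) j‖ ^ 2 ≤ (th (((2 ^ 2 ^ m : ℕ) : ℝ)) j) ^ 2 := normsq_phi_le _ _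
    _ = 4 * Real.pi ^ 2 * (1/4 : ℝ) ^ d := hth
    _ ≤ 4 * Real.pi ^ 2 * (1/4 : ℝ) ^ (2 ^ m + i) := by
        have hpi : (0:ℝ) < Real.pi := Real.pi_pos
        apply mul_le_mul_of_nonneg_left hmono (by positivity)
    _ = (4 * Real.pi ^ 2 * (1/4 : ℝ) ^ 2 ^ m) * (1/4 : ℝ) ^ i := by rw [pow_add]; ring

lemma norm_B_dyadic_sq (m : ℕ) :
    ‖B (((2 ^ 2 ^ m : ℕ) : ℝ))‖ ^ 2 ≤ 6 * Real.pi ^ 2 * (1/4 : ℝ) ^ m := by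
  set x := ((2 ^ 2 ^ m : ℕ) : ℝ) with hx
  have hsum : Summable (fun n => ‖phi x n‖ ^ 2) := summable_sq x
  rw [norm_sq_eq]
  simp only [B_apply]
  rw [← Summable.sum_add_tsum_nat_add (m + 1) hsum]
  have hzero : ∑ i ∈ Finset.range (m + 1), ‖phi x i‖ ^ 2 = 0 := by
    apply Finset.sum_eq_zero
    intro i hi
    exact phi_dyadic_zero (by simp at hi; omega)
  rw [hzero, zero_add]
  have htail : ∑' i, ‖phi x (i + (m + 1))‖ ^ 2
      ≤ ∑' i : ℕ, (4 * Real.pi ^ 2 * (1/4 : ℝ) ^ 2 ^ m) * (1/4 : ℝ) ^ i := by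
    apply Summable.tsum_le_tsum (fun i => phi_dyadic_tail m i)
      ((summable_nat_add_iff (m+1)).mpr hsum) (summable_geom_mul _)
  have hgeo : ∑' i : ℕ, (4 * Real.pi ^ 2 * (1/4 : ℝ) ^ 2 ^ m) * (1/4 : ℝ) ^ i
      = (4 * Real.pi ^ 2 * (1/4 : ℝ) ^ 2 ^ m) * (4/3 : ℝ) := by
    rw [tsum_mul_left, tsum_geometric_of_lt_one (by norm_num) (by norm_num)]
    norm_num
  have hmono : (1/4 : ℝ) ^ 2 ^ m ≤ (1/4 : ℝ) ^ m :=
    pow_le_pow_of_le_one (by norm_num) (by norm_num) (Nat.le_of_lt (Nat.lt_two_pow_self (n := m)))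
  have hpi := Real.pi_pos
  have h4 : (0:ℝ) ≤ 4 * Real.pi ^ 2 := by positivity
  calc ∑' i, ‖phi x (i + (m + 1))‖ ^ 2 ≤ (4 * Real.pi ^ 2 * (1/4 : ℝ) ^ 2 ^ m) * (4/3 : ℝ) := by
        rw [← hgeo]; exact htail
    _ ≤ 6 * Real.pi ^ 2 * (1/4 : ℝ) ^ m := by nlinarith [pow_nonneg (by norm_num : (0:ℝ) ≤ 1/4) m, pow_nonneg (by norm_num : (0:ℝ) ≤ 1/4) (2^m)]

lemma collapsed_B : ∀ t : ℝ, 0 < t →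
    sInf {r : ℝ | ∃ x y : ℝ, t ≤ |x - y| ∧ ‖B x - B y‖ = r} = 0 := by
  intro t ht
  set S := {r : ℝ | ∃ x y : ℝ, t ≤ |x - y| ∧ ‖B x - B y‖ = r} with hS
  have hbdd : BddBelow S := ⟨0, fun r hr => by obtain ⟨x, y, _, hr⟩ := hr; rw [← hr]; positivity⟩
  have hle : ∀ ε : ℝ, 0 < ε → sInf S ≤ 0 + ε := by
    intro ε hε
    have hpi := Real.pi_pos
    have hε2 : 0 < ε ^ 2 / (6 * Real.pi ^ 2) := by positivity
    obtain ⟨m₁, hm₁⟩ := exists_pow_lt_of_lt_one hε2 (by norm_num : (1/4 : ℝ) < 1)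
    obtain ⟨m₂, hm₂⟩ := exists_nat_ge t
    set m := max m₁ m₂ with hm
    set x := ((2 ^ 2 ^ m : ℕ) : ℝ) with hx
    have hxt : t ≤ x := by
      have h1 : (m₂ : ℕ) ≤ 2 ^ 2 ^ m := by
        calc m₂ ≤ m := le_max_right _ _
          _ ≤ 2 ^ m := Nat.le_of_lt (Nat.lt_two_pow_self (n := m))
          _ ≤ 2 ^ 2 ^ m := Nat.pow_le_pow_right (by norm_num) (Nat.le_of_lt (Nat.lt_two_pow_self (n := m)))
      calc t ≤ (m₂ : ℝ) := hm₂
        _ ≤ x := by rw [hx]; exact_mod_cast h1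
    have hmem : ‖B x - B 0‖ ∈ S := ⟨x, 0, by rwa [sub_zero, abs_of_pos (lt_of_lt_of_le ht hxt)], rfl⟩
    have hnorm : ‖B x - B 0‖ ≤ ε := by
      have h1 : ‖B x - B 0‖ = ‖B x‖ := by rw [norm_B_sub]; norm_num
      rw [h1]
      have h2 : ‖B x‖ ^ 2 ≤ 6 * Real.pi ^ 2 * (1/4 : ℝ) ^ m := norm_B_dyadic_sq m
      have h3 : (1/4 : ℝ) ^ m ≤ (1/4 : ℝ) ^ m₁ :=
        pow_le_pow_of_le_one (by norm_num) (by norm_num) (le_max_left _ _)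
      have h4 : 6 * Real.pi ^ 2 * (1/4 : ℝ) ^ m < ε ^ 2 := by
        have := mul_lt_mul_of_pos_left (lt_of_le_of_lt h3 hm₁) (by positivity : (0:ℝ) < 6 * Real.pi ^ 2)
        calc 6 * Real.pi ^ 2 * (1/4 : ℝ) ^ m < 6 * Real.pi ^ 2 * (ε ^ 2 / (6 * Real.pi ^ 2)) := this
          _ = ε ^ 2 := by field_simp
      have h5 : ‖B x‖ ^ 2 ≤ ε ^ 2 := by linarith
      exact (pow_le_pow_iff_left₀ (norm_nonneg _) hε.le (by norm_num)).mp h5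
    calc sInf S ≤ ‖B x - B 0‖ := csInf_le hbdd hmem
      _ ≤ ε := hnorm
      _ ≤ 0 + ε := by linarith
  have h1 : sInf S ≤ 0 := le_of_forall_pos_le_add hle
  have h2 : 0 ≤ sInf S := Real.sInf_nonneg fun r hr => by
    obtain ⟨a, b, _, hr⟩ := hr; rw [← hr]; positivity
  linarith

end CocycleAux

end CocycleAux

/-- The cocycle b(t) = (1 - exp(2πit/2^{2^n}))ₙ is a well-defined map ℝ → ℓ₂(ℕ,ℂ) satisfying
‖b(t) - b(s)‖ = ‖b(t-s)‖, which is Lipschitz, solvent, and collapsed. -/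
theorem exists_lipschitz_solvent_collapsed_cocycle :
    (∀ t : ℝ, Memℓp (fun n : ℕ =>
        1 - Complex.exp (2 * Real.pi * Complex.I * (t : ℂ) / 2 ^ 2 ^ n)) 2) ∧
    ∃ b : ℝ → lp (fun _ : ℕ => ℂ) 2,
      (∀ (t : ℝ) (n : ℕ), (b t : ∀ _ : ℕ, ℂ) n =
          1 - Complex.exp (2 * Real.pi * Complex.I * (t : ℂ) / 2 ^ 2 ^ n)) ∧
      (∀ s t : ℝ, ‖b t - b s‖ = ‖b (t - s)‖) ∧
      (∃ K : ℝ≥0, LipschitzWith K b) ∧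
      Solvent b ∧
      (∀ t : ℝ, 0 < t →
        sInf {r : ℝ | ∃ x y : ℝ, t ≤ |x - y| ∧ ‖b x - b y‖ = r} = 0) := by
  refine ⟨CocycleAux.mem_l2, CocycleAux.B, CocycleAux.B_apply, CocycleAux.norm_B_sub,
    ⟨_, CocycleAux.lipschitz_B⟩, CocycleAux.solvent_B, CocycleAux.collapsed_B⟩
end

section
/- Let (M,d) be a metric space, n ∈ ℕ, q, Γ > 0, r ∈ [1,∞], and let m be an even positive integer such that for every map g : ℤ_m^n → M one has ∑_{j=1}^n m^{-n} ∑_{x ∈ ℤ_m^n} d(g(x + (m/2)e_j), g(x))^q ≤ Γ^q m^q · 3^{-n} m^{-n} ∑_{ε ∈ {−1,0,1}^n} ∑_{x ∈ ℤ_m^n} d(g(x+ε), g(x))^q. Then for every map f : ℓ_r^n(ℂ) → M and every s > 0, n^{1/q} · ρ̄_f(2s) ≤ Γ · m · ω_f(2π s n^{1/r} / m) (with the convention 1/r = 0 when r = ∞). -/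
open Metric
open scoped ENNReal NNReal

/-- Expansion modulus, valued in ℝ≥0∞. -/
noncomputable def eOmega {A M : Type*} [PseudoMetricSpace A] [PseudoMetricSpace M]
    (f : A → M) (t : ℝ) : ℝ≥0∞ :=
  ⨆ (x : A) (y : A) (_ : dist x y ≤ t), edist (f x) (f y)

/-- Exact compression modulus, valued in ℝ≥0∞. -/
noncomputable def eRhoBar {A M : Type*} [PseudoMetricSpace A] [PseudoMetricSpace M]
    (f : A → M) (t : ℝ) : ℝ≥0∞ :=
  ⨅ (x : A) (y : A) (_ : dist x y = t), edist (f x) (f y)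

/-!
The map `x ↦ s · (e^{2πi x_j / m})_j` sends `ℤ_m^n` into `ℓ_r^n(ℂ)` so that the antipodal edges
`x ↦ x + (m/2) e_j` have length exactly `2s`, while every edge `x ↦ x + ε`, `ε ∈ {-1,0,1}^n`, has
length at most `2πs n^{1/r} / m`, since each coordinate moves by at most `2πs / m`. Composing `f`
with this map and feeding it to the cotype inequality, the left side is at least `n ρ̄_f(2s)^q`
and the averaged right side at most `ω_f(2πs n^{1/r}/m)^q`; taking `q`-th roots gives the bound.
-/

open Finset

section Moduli

variable {A M : Type*} [PseudoMetricSpace A] [PseudoMetricSpace M] {f : A → M} {x y : A} {t : ℝ}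

lemma eRhoBar_le_edist (h : dist x y = t) : eRhoBar f t ≤ edist (f x) (f y) :=
  iInf₂_le_of_le x y (iInf_le_of_le h le_rfl)

lemma edist_le_eOmega (h : dist x y ≤ t) : edist (f x) (f y) ≤ eOmega f t :=
  le_iSup₂_of_le x y (le_iSup_of_le h le_rfl)

lemma toReal_eRhoBar_le_dist (h : dist x y = t) : (eRhoBar f t).toReal ≤ dist (f x) (f y) := by
  rw [dist_edist]
  exact ENNReal.toReal_mono (edist_ne_top _ _) (eRhoBar_le_edist h)

lemma dist_le_toReal_eOmega (hω : eOmega f t ≠ ⊤) (h : dist x y ≤ t) :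
    dist (f x) (f y) ≤ (eOmega f t).toReal := by
  rw [dist_edist]
  exact ENNReal.toReal_mono hω (edist_le_eOmega h)

end Moduli

namespace ZMod

variable {m : ℕ} [NeZero m]

lemma toCircle_natCast_half (hm : Even m) : (toCircle ((m / 2 : ℕ) : ZMod m) : ℂ) = -1 := by
  obtain ⟨k, rfl⟩ := hm
  have hk : (k : ℂ) ≠ 0 := by exact_mod_cast fun h => NeZero.ne (k + k) (by omega)
  rw [toCircle_natCast, ← Complex.exp_pi_mul_I, show (k + k) / 2 = k by omega]
  congr 1
  push_cast
  field_simp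
  ring

lemma norm_toCircle_intCast_sub_one_le (k : ℤ) :
    ‖(toCircle (k : ZMod m) : ℂ) - 1‖ ≤ 2 * Real.pi * |(k : ℝ)| / m := by
  have hm : (0 : ℝ) < m := by exact_mod_cast Nat.pos_of_ne_zero (NeZero.ne m)
  have hexp : 2 * Real.pi * Complex.I * k / m = Complex.I * ((2 * Real.pi * k / m : ℝ) : ℂ) := by
    push_cast
    ring
  rw [toCircle_intCast, hexp]
  refine Real.norm_exp_I_mul_ofReal_sub_one_le.trans_eq ?_
  rw [Real.norm_eq_abs, abs_div, abs_mul, abs_of_pos Real.two_pi_pos, abs_of_pos hm]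

end ZMod

noncomputable def circleEmbedding (n m : ℕ) [NeZero m] (r : ℝ≥0∞) (s : ℝ)
    (x : Fin n → ZMod m) : PiLp r (fun _ : Fin n => ℂ) :=
  WithLp.toLp r fun j => (s : ℂ) * ZMod.toCircle (x j)

section CircleEmbedding

variable {n m : ℕ} [NeZero m] {r : ℝ≥0∞} [Fact (1 ≤ r)] {s : ℝ}

lemma dist_circleEmbedding_add_half (hm : Even m) (hs : 0 ≤ s) (x : Fin n → ZMod m) (j : Fin n) :
    dist (circleEmbedding n m r s (x + Pi.single j ((m / 2 : ℕ) : ZMod m)))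
      (circleEmbedding n m r s x) = 2 * s := by
  have hdiff : circleEmbedding n m r s (x + Pi.single j ((m / 2 : ℕ) : ZMod m))
      - circleEmbedding n m r s x
      = PiLp.single r j (-(2 * s : ℂ) * ZMod.toCircle (x j)) := by
    rw [circleEmbedding, circleEmbedding, ← WithLp.toLp_sub, PiLp.single]
    congr 1
    ext i
    rcases eq_or_ne i j with rfl | hij
    · simp [AddChar.map_add_eq_mul, ZMod.toCircle_natCast_half hm]
      ring
    · simp [Pi.single_eq_of_ne hij]
  rw [dist_eq_norm, hdiff, PiLp.norm_single, norm_mul, norm_neg, Circle.norm_coe, mul_one]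
  norm_cast
  rw [Real.norm_of_nonneg (by positivity)]

lemma dist_circleEmbedding_add_le (hs : 0 ≤ s) (x : Fin n → ZMod m) (k : Fin n → ℤ)
    (hk : ∀ i, |k i| ≤ 1) :
    dist (circleEmbedding n m r s (x + fun i => (k i : ZMod m))) (circleEmbedding n m r s x)
      ≤ 2 * Real.pi * s * (n : ℝ) ^ (1 / r).toReal / m := by
  have hcoord : dist (fun i => (s : ℂ) * ZMod.toCircle ((x + fun i => (k i : ZMod m)) i))
      (fun i => (s : ℂ) * ZMod.toCircle (x i)) ≤ 2 * Real.pi * s / m := by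
    refine (dist_pi_le_iff (by positivity)).mpr fun i => ?_
    have hki : 2 * Real.pi * |(k i : ℝ)| / m ≤ 2 * Real.pi / m :=
      div_le_div_of_nonneg_right
        (mul_le_of_le_one_right Real.two_pi_pos.le (by exact_mod_cast hk i)) m.cast_nonneg
    calc dist ((s : ℂ) * ZMod.toCircle (x i + (k i : ZMod m))) ((s : ℂ) * ZMod.toCircle (x i))
        = s * ‖(ZMod.toCircle (k i : ZMod m) : ℂ) - 1‖ := by
          rw [dist_eq_norm, AddChar.map_add_eq_mul, Circle.coe_mul, ← mul_sub, ← mul_sub_one,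
            norm_mul, norm_mul, Circle.norm_coe, one_mul, Complex.norm_real,
            Real.norm_of_nonneg hs]
      _ ≤ s * (2 * Real.pi / m) :=
          mul_le_mul_of_nonneg_left ((ZMod.norm_toCircle_intCast_sub_one_le _).trans hki) hs
      _ = 2 * Real.pi * s / m := by ring
  calc _ ≤ ((Fintype.card (Fin n) : ℝ≥0) ^ (1 / r).toReal : ℝ≥0) * (2 * Real.pi * s / m) :=
        ((PiLp.lipschitzWith_toLp r _).dist_le_mul _ _).trans
          (mul_le_mul_of_nonneg_left hcoord (NNReal.coe_nonneg _))
    _ = 2 * Real.pi * s * (n : ℝ) ^ (1 / r).toReal / m := by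
        push_cast
        rw [Fintype.card_fin]
        ring

end CircleEmbedding

lemma rpow_one_div_mul_le_of_mul_rpow_le {a b c q : ℝ} (hq : 0 < q) (ha : 0 ≤ a) (hb : 0 ≤ b)
    (hc : 0 ≤ c) (h : a * b ^ q ≤ c ^ q) : a ^ (1 / q) * b ≤ c := by
  refine (Real.rpow_le_rpow_iff (by positivity) hc hq).mp ?_
  rwa [Real.mul_rpow (by positivity) hb, ← Real.rpow_mul ha, one_div_mul_cancel hq.ne',
    Real.rpow_one]

section Averages

variable {X : Type*} [Fintype X] [Nonempty X] {F : X → ℝ} {a : ℝ}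

lemma le_inv_card_mul_sum (h : ∀ x, a ≤ F x) : a ≤ (Fintype.card X : ℝ)⁻¹ * ∑ x, F x := by
  rw [le_inv_mul_iff₀ (by exact_mod_cast Fintype.card_pos), ← nsmul_eq_mul]
  exact card_nsmul_le_sum _ _ _ fun x _ => h x

lemma inv_card_mul_sum_le (h : ∀ x, F x ≤ a) : (Fintype.card X : ℝ)⁻¹ * ∑ x, F x ≤ a := by
  rw [inv_mul_le_iff₀ (by exact_mod_cast Fintype.card_pos), ← nsmul_eq_mul]
  exact sum_le_card_nsmul _ _ _ fun x _ => h x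

end Averages

section Grid

variable {M : Type*} [PseudoMetricSpace M] {n m : ℕ} [NeZero m] {q : ℝ}
  (g : (Fin n → ZMod m) → M)

lemma card_fun_fin_zmod : (Fintype.card (Fin n → ZMod m) : ℝ) = (m : ℝ) ^ n := by
  simp [ZMod.card]

lemma natCast_mul_rpow_le_sum_average_dist_rpow (hq : 0 ≤ q) {ρ : ℝ} (hρ : 0 ≤ ρ)
    (e : Fin n → Fin n → ZMod m) (h : ∀ x j, ρ ≤ dist (g (x + e j)) (g x)) :
    n * ρ ^ q ≤ ∑ j, ((m : ℝ) ^ n)⁻¹ * ∑ x, dist (g (x + e j)) (g x) ^ q := by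
  rw [← card_fun_fin_zmod]
  calc (n : ℝ) * ρ ^ q = ∑ _j : Fin n, ρ ^ q := by simp
    _ ≤ _ := sum_le_sum fun j _ =>
        le_inv_card_mul_sum fun x => Real.rpow_le_rpow hρ (h x j) hq

lemma average_average_dist_rpow_le (hq : 0 ≤ q) {W : ℝ} (e : (Fin n → Fin 3) → Fin n → ZMod m)
    (h : ∀ x ε, dist (g (x + e ε)) (g x) ≤ W) :
    ((3 : ℝ) ^ n)⁻¹ * ((m : ℝ) ^ n)⁻¹ * ∑ ε, ∑ x, dist (g (x + e ε)) (g x) ^ q ≤ W ^ q := by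
  have hcube : (Fintype.card (Fin n → Fin 3) : ℝ) = (3 : ℝ) ^ n := by simp
  rw [← hcube, ← card_fun_fin_zmod, mul_assoc, mul_sum]
  exact inv_card_mul_sum_le fun ε => inv_card_mul_sum_le fun x =>
    Real.rpow_le_rpow dist_nonneg (h x ε) hq

end Grid

theorem metric_cotype_compression_bound_general
    {M : Type*} [MetricSpace M] (n : ℕ) (q Γ : ℝ) (hq : 0 < q) (hΓ : 0 < Γ)
    (r : ℝ≥0∞) [Fact (1 ≤ r)]
    (m : ℕ) [NeZero m] (hmeven : Even m)
    (hm : ∀ g : (Fin n → ZMod m) → M,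
      ∑ j : Fin n, ((m : ℝ) ^ n)⁻¹ *
          ∑ x : Fin n → ZMod m,
            dist (g (x + fun i => if i = j then ((m / 2 : ℕ) : ZMod m) else 0)) (g x) ^ q
        ≤ Γ ^ q * (m : ℝ) ^ q * (((3 : ℝ) ^ n)⁻¹ * ((m : ℝ) ^ n)⁻¹ *
            ∑ ε : Fin n → Fin 3, ∑ x : Fin n → ZMod m,
              dist (g (x + fun i => (((ε i : ℤ) - 1 : ℤ) : ZMod m))) (g x) ^ q))
    (f : PiLp r (fun _ : Fin n => ℂ) → M) (s : ℝ) (hs : 0 < s) :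
    (n : ℝ≥0∞) ^ (1 / q) * eRhoBar f (2 * s)
      ≤ ENNReal.ofReal Γ * (m : ℝ≥0∞) *
        eOmega f (2 * Real.pi * s * (n : ℝ) ^ (1 / r).toReal / (m : ℝ)) := by
  set t := 2 * Real.pi * s * (n : ℝ) ^ (1 / r).toReal / (m : ℝ)
  rcases Nat.eq_zero_or_pos n with rfl | hn
  · rw [Nat.cast_zero, ENNReal.zero_rpow_of_pos (one_div_pos.mpr hq), zero_mul]
    exact zero_le
  by_cases hω : eOmega f t = ⊤
  · simp [hω, ENNReal.mul_top, hΓ, NeZero.ne m]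
  let φ := circleEmbedding n m r s
  have hhalf (x : Fin n → ZMod m) (j : Fin n) :
      dist (φ (x + fun i => if i = j then ((m / 2 : ℕ) : ZMod m) else 0)) (φ x) = 2 * s := by
    simp only [← Pi.single_apply]
    exact dist_circleEmbedding_add_half hmeven hs.le x j
  have hstep (x : Fin n → ZMod m) (ε : Fin n → Fin 3) :
      dist (φ (x + fun i => (((ε i : ℤ) - 1 : ℤ) : ZMod m))) (φ x) ≤ t :=
    dist_circleEmbedding_add_le hs.le x _ fun i => abs_le.mpr ⟨by omega, by omega⟩
  have hρ : eRhoBar f (2 * s) ≠ ⊤ :=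
    ne_top_of_le_ne_top (edist_ne_top _ _) (eRhoBar_le_edist (hhalf 0 ⟨0, hn⟩))
  have hcotype : n * (eRhoBar f (2 * s)).toReal ^ q ≤ (Γ * m * (eOmega f t).toReal) ^ q := by
    rw [Real.mul_rpow (by positivity) ENNReal.toReal_nonneg, Real.mul_rpow hΓ.le m.cast_nonneg]
    calc _ ≤ _ := natCast_mul_rpow_le_sum_average_dist_rpow (f ∘ φ) hq.le ENNReal.toReal_nonneg
          _ fun x j => toReal_eRhoBar_le_dist (f := f) (hhalf x j)
      _ ≤ _ := hm (f ∘ φ)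
      _ ≤ _ := by
        gcongr
        exact average_average_dist_rpow_le (f ∘ φ) hq.le _ fun x ε =>
          dist_le_toReal_eOmega (f := f) hω (hstep x ε)
  have hreal := rpow_one_div_mul_le_of_mul_rpow_le hq n.cast_nonneg ENNReal.toReal_nonneg
    (by positivity) hcotype
  rw [← ENNReal.toReal_le_toReal (by finiteness) (by finiteness)]
  rwa [ENNReal.toReal_mul, ENNReal.toReal_mul, ENNReal.toReal_mul, ← ENNReal.toReal_rpow,
    ENNReal.toReal_natCast, ENNReal.toReal_natCast, ENNReal.toReal_ofReal hΓ.le]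

/-- If the even integer m witnesses metric cotype q with constant Γ in dimension n for M,
then for every f : ℓ_rⁿ(ℂ) → M and every s > 0,
n^{1/q} ρ̄_f(2s) ≤ Γ m ω_f(2πs n^{1/r} / m). -/
theorem metric_cotype_compression_bound
    {M : Type*} [MetricSpace M] (n : ℕ) (q Γ : ℝ) (hq : 0 < q) (hΓ : 0 < Γ)
    (r : ℝ≥0∞) [Fact (1 ≤ r)]
    (m : ℕ) [NeZero m] (hmpos : 0 < m) (hmeven : Even m)
    (hm : ∀ g : (Fin n → ZMod m) → M,
      ∑ j : Fin n, ((m : ℝ) ^ n)⁻¹ *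
          ∑ x : Fin n → ZMod m,
            dist (g (x + fun i => if i = j then ((m / 2 : ℕ) : ZMod m) else 0)) (g x) ^ q
        ≤ Γ ^ q * (m : ℝ) ^ q * (((3 : ℝ) ^ n)⁻¹ * ((m : ℝ) ^ n)⁻¹ *
            ∑ ε : Fin n → Fin 3, ∑ x : Fin n → ZMod m,
              dist (g (x + fun i => (((ε i : ℤ) - 1 : ℤ) : ZMod m))) (g x) ^ q))
    (f : PiLp r (fun _ : Fin n => ℂ) → M) (s : ℝ) (hs : 0 < s) :
    (n : ℝ≥0∞) ^ (1 / q) * eRhoBar f (2 * s)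
      ≤ ENNReal.ofReal Γ * (m : ℝ≥0∞) *
        eOmega f (2 * Real.pi * s * (n : ℝ) ^ (1 / r).toReal / (m : ℝ)) :=
  metric_cotype_compression_bound_general n q Γ hq hΓ r m hmeven hm f s hs
end

section
/- Let X and Y be Banach spaces and assume Y has Property 𝒬. If there exists a coarse solvent map φ : X → Y, then X has Property 𝒬. -/
/-!
For `f : P_k(ℕ) → X` with interlacing pairs `δ`-close, let `L` be the infimum of the bounds `a`
such that `∂(f n̄, f m̄) ≤ a` for all `n̄ < m̄` in some infinite `𝕄`; it is finite because `n̄`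
and `m̄` are joined by `k` interlacing steps. If `L ≥ ε`, pass to an infinite `𝕄` on which these
distances are at most `L + η`, while every infinite subset still has a pair at distance `> L - η`.
Rescaling `f` by `s = (R + w/2)/L` puts such a pair in a window `[R, R + w]` on which `φ` is
solvent, i.e. `φ` moves it by more than `ε'`. For `δ` small, rescaled interlacing pairs are
`1`-close, so coarseness lets Property Q(ε', cε') of `Y` apply to `φ ∘ s f`: on an infinite subset
of `𝕄` all pairs `n̄ < m̄` are moved by at most `ε'`, a contradiction. Hence `L < ε`.
-/

open Metric
open scoped ENNReal NNReal

/-- Two strictly increasing k-tuples interlace: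
n₁ ≤ m₁ ≤ n₂ ≤ … ≤ n_k ≤ m_k or m₁ ≤ n₁ ≤ m₂ ≤ … ≤ m_k ≤ n_k. -/
def Interlace {k : ℕ} (nb mb : Fin k → ℕ) : Prop :=
    ((∀ i, nb i ≤ mb i) ∧ ∀ i j : Fin k, (i : ℕ) + 1 = (j : ℕ) → mb i ≤ nb j) ∨
    ((∀ i, mb i ≤ nb i) ∧ ∀ i j : Fin k, (i : ℕ) + 1 = (j : ℕ) → nb i ≤ mb j)

/-- Property Q(ε,δ): elements of P_k(ℕ) are encoded as strictly increasing k-tuples. -/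
def PropertyQED (M : Type*) [PseudoMetricSpace M] (ε δ : ℝ) : Prop :=
  ∀ (k : ℕ) (f : (Fin k → ℕ) → M),
    (∀ nb mb : Fin k → ℕ, StrictMono nb → StrictMono mb → Interlace nb mb →
      dist (f nb) (f mb) ≤ δ) →
    ∃ 𝕄 : Set ℕ, 𝕄.Infinite ∧
      ∀ nb mb : Fin k → ℕ, StrictMono nb → StrictMono mb →
        (∀ i, nb i ∈ 𝕄) → (∀ i, mb i ∈ 𝕄) → (∀ i j : Fin k, nb i < mb j) →
        dist (f nb) (f mb) ≤ ε

/-- Property 𝒬 for a Banach space: Property Q(ε, cε) holds for every ε > 0, for some c > 0. -/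
def PropertyQ (M : Type*) [PseudoMetricSpace M] : Prop :=
  ∃ c : ℝ, 0 < c ∧ ∀ ε : ℝ, 0 < ε → PropertyQED M ε (c * ε)


theorem Interlace.comp_monotone {k : ℕ} {nb mb : Fin k → ℕ} {e : ℕ → ℕ} (he : Monotone e)
    (h : Interlace nb mb) : Interlace (fun i => e (nb i)) (fun i => e (mb i)) := by
  rcases h with ⟨hle, hnext⟩ | ⟨hle, hnext⟩
  · exact Or.inl ⟨fun i => he (hle i), fun i j hij => he (hnext i j hij)⟩
  · exact Or.inr ⟨fun i => he (hle i), fun i j hij => he (hnext i j hij)⟩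

section Chain

variable {k : ℕ} {nb mb : Fin k → ℕ}

/-- The sequence `n₁, …, n_k, m₁, …, m_k`, continued by `m_k`. -/
def concatSeq (hk : 0 < k) (nb mb : Fin k → ℕ) (t : ℕ) : ℕ :=
  if ht : t < k then nb ⟨t, ht⟩ else mb ⟨min (t - k) (k - 1), by omega⟩

theorem concatSeq_lt_concatSeq (hk : 0 < k) (hnb : StrictMono nb) (hmb : StrictMono mb)
    (hsep : ∀ i j, nb i < mb j) {t t' : ℕ} (h : t < t') (h' : t' < 2 * k) :
    concatSeq hk nb mb t < concatSeq hk nb mb t' := by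
  unfold concatSeq
  split_ifs
  · exact hnb (Fin.mk_lt_mk.mpr h)
  · exact hsep _ _
  · omega
  · exact hmb (Fin.mk_lt_mk.mpr (by omega))

def concatWindow (hk : 0 < k) (nb mb : Fin k → ℕ) (j : ℕ) (i : Fin k) : ℕ :=
  concatSeq hk nb mb (i + j)

theorem concatWindow_zero (hk : 0 < k) : concatWindow hk nb mb 0 = nb := by
  funext i
  simp [concatWindow, concatSeq]

theorem concatWindow_self (hk : 0 < k) : concatWindow hk nb mb k = mb := by
  funext i
  simp only [concatWindow, concatSeq, dif_neg (Nat.not_lt.mpr (Nat.le_add_left k i))]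
  exact congrArg mb (Fin.ext (by simp; omega))

theorem strictMono_concatWindow (hnb : StrictMono nb) (hmb : StrictMono mb)
    (hsep : ∀ i j, nb i < mb j) (hk : 0 < k) {j : ℕ} (hj : j ≤ k) :
    StrictMono (concatWindow hk nb mb j) := fun i i' hii' =>
  concatSeq_lt_concatSeq hk hnb hmb hsep (by simpa using hii') (by omega)

theorem interlace_concatWindow_succ (hnb : StrictMono nb) (hmb : StrictMono mb)
    (hsep : ∀ i j, nb i < mb j) (hk : 0 < k) {j : ℕ} (hj : j < k) :
    Interlace (concatWindow hk nb mb j) (concatWindow hk nb mb (j + 1)) := by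
  refine Or.inl ⟨fun i => (concatSeq_lt_concatSeq hk hnb hmb hsep ?_ ?_).le, fun i i' hii' => ?_⟩
  · omega
  · omega
  · simp only [concatWindow]
    rw [← hii', Nat.add_right_comm, Nat.add_assoc]

/-- The windows of the concatenation walk from `n̄` to `m̄` in `k` interlacing steps. -/
theorem dist_le_mul_of_interlace {M : Type*} [PseudoMetricSpace M] {f : (Fin k → ℕ) → M} {δ : ℝ}
    (hnb : StrictMono nb) (hmb : StrictMono mb) (hsep : ∀ i j, nb i < mb j)
    (hf : ∀ nb mb : Fin k → ℕ, StrictMono nb → StrictMono mb → Interlace nb mb →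
      dist (f nb) (f mb) ≤ δ) :
    dist (f nb) (f mb) ≤ k * δ := by
  obtain rfl | hk := k.eq_zero_or_pos
  · simp [Subsingleton.elim nb mb]
  set F : ℕ → M := fun j => f (concatWindow hk nb mb j)
  calc dist (f nb) (f mb) = dist (F 0) (F k) := by
        simp only [F, concatWindow_zero, concatWindow_self]
    _ ≤ ∑ j ∈ Finset.range k, dist (F j) (F (j + 1)) := dist_le_range_sum_dist F k
    _ ≤ ∑ _j ∈ Finset.range k, δ := Finset.sum_le_sum fun j hj => by
        have hj : j < k := Finset.mem_range.mp hj
        exact hf _ _ (strictMono_concatWindow hnb hmb hsep hk hj.le)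
          (strictMono_concatWindow hnb hmb hsep hk hj)
          (interlace_concatWindow_succ hnb hmb hsep hk hj)
    _ = k * δ := by simp

end Chain

section SeparatedDist

variable {M : Type*} [PseudoMetricSpace M] {k : ℕ}

def SeparatedDistLE (f : (Fin k → ℕ) → M) (𝕄 : Set ℕ) (a : ℝ) : Prop :=
  ∀ nb mb : Fin k → ℕ, StrictMono nb → StrictMono mb →
    (∀ i, nb i ∈ 𝕄) → (∀ i, mb i ∈ 𝕄) → (∀ i j : Fin k, nb i < mb j) →
    dist (f nb) (f mb) ≤ a

noncomputable def separatedInf (f : (Fin k → ℕ) → M) : ℝ :=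
  sInf {a | ∃ 𝕄 : Set ℕ, 𝕄.Infinite ∧ SeparatedDistLE f 𝕄 a}

variable {f : (Fin k → ℕ) → M} {𝕄 : Set ℕ} {a : ℝ}

theorem SeparatedDistLE.mono {𝕄' : Set ℕ} {a' : ℝ} (h : SeparatedDistLE f 𝕄 a) (h𝕄 : 𝕄' ⊆ 𝕄)
    (ha : a ≤ a') : SeparatedDistLE f 𝕄' a' :=
  fun nb mb hnb hmb hn hm hsep =>
    (h nb mb hnb hmb (fun i => h𝕄 (hn i)) (fun i => h𝕄 (hm i)) hsep).trans ha

theorem SeparatedDistLE.nonneg (h : SeparatedDistLE f 𝕄 a) (h𝕄 : 𝕄.Infinite) : 0 ≤ a := by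
  have hu := Nat.nth_strictMono h𝕄
  exact dist_nonneg.trans (h (fun i => Nat.nth (· ∈ 𝕄) i) (fun i => Nat.nth (· ∈ 𝕄) (k + i))
    (fun i j hij => hu hij) (fun i j hij => hu (by simpa using hij))
    (fun i => Nat.nth_mem_of_infinite h𝕄 _) (fun i => Nat.nth_mem_of_infinite h𝕄 _)
    (fun i j => hu (by omega)))

theorem SeparatedDistLE.image_of_strictMono {e : ℕ → ℕ} (he : StrictMono e)
    (h : SeparatedDistLE (fun p => f (fun i => e (p i))) 𝕄 a) : SeparatedDistLE f (e '' 𝕄) a := by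
  intro nb mb hnb hmb hn hm hsep
  choose p hp𝕄 hpe using hn
  choose q hq𝕄 hqe using hm
  have hnb' : nb = fun i => e (p i) := funext fun i => (hpe i).symm
  have hmb' : mb = fun i => e (q i) := funext fun i => (hqe i).symm
  subst hnb' hmb'
  exact h p q (fun i j hij => he.lt_iff_lt.mp (hnb hij)) (fun i j hij => he.lt_iff_lt.mp (hmb hij))
    hp𝕄 hq𝕄 fun i j => he.lt_iff_lt.mp (hsep i j)

theorem separatedDistLE_univ_of_interlace {δ : ℝ}
    (hf : ∀ nb mb : Fin k → ℕ, StrictMono nb → StrictMono mb → Interlace nb mb →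
      dist (f nb) (f mb) ≤ δ) :
    SeparatedDistLE f Set.univ (k * δ) :=
  fun _ _ hnb hmb _ _ hsep => dist_le_mul_of_interlace hnb hmb hsep hf

theorem bddBelow_separatedBounds :
    BddBelow {a | ∃ 𝕄 : Set ℕ, 𝕄.Infinite ∧ SeparatedDistLE f 𝕄 a} :=
  ⟨0, fun _ ⟨_, h𝕄, h⟩ => h.nonneg h𝕄⟩

theorem not_separatedDistLE_of_lt_separatedInf (h𝕄 : 𝕄.Infinite) (ha : a < separatedInf f) :
    ¬ SeparatedDistLE f 𝕄 a :=
  fun h => (csInf_le bddBelow_separatedBounds ⟨𝕄, h𝕄, h⟩).not_gt ha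

theorem exists_separatedDistLE_of_separatedInf_lt {δ : ℝ}
    (hf : ∀ nb mb : Fin k → ℕ, StrictMono nb → StrictMono mb → Interlace nb mb →
      dist (f nb) (f mb) ≤ δ)
    (ha : separatedInf f < a) : ∃ 𝕄 : Set ℕ, 𝕄.Infinite ∧ SeparatedDistLE f 𝕄 a := by
  obtain ⟨a', ⟨𝕄, h𝕄, h⟩, ha'⟩ := (csInf_lt_iff bddBelow_separatedBounds
    ⟨_, Set.univ, Set.infinite_univ, separatedDistLE_univ_of_interlace hf⟩).mp ha
  exact ⟨𝕄, h𝕄, h.mono subset_rfl ha'.le⟩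

theorem PropertyQED.exists_subset_separatedDistLE {Y : Type*} [PseudoMetricSpace Y] {ε δ : ℝ}
    (hQ : PropertyQED Y ε δ) {k : ℕ} {g : (Fin k → ℕ) → Y} {𝕄 : Set ℕ} (h𝕄 : 𝕄.Infinite)
    (hg : ∀ nb mb : Fin k → ℕ, StrictMono nb → StrictMono mb → (∀ i, nb i ∈ 𝕄) →
      (∀ i, mb i ∈ 𝕄) → Interlace nb mb → dist (g nb) (g mb) ≤ δ) :
    ∃ 𝕄' ⊆ 𝕄, 𝕄'.Infinite ∧ SeparatedDistLE g 𝕄' ε := by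
  set e := Nat.nth (· ∈ 𝕄)
  have he : StrictMono e := Nat.nth_strictMono h𝕄
  have he𝕄 : ∀ n, e n ∈ 𝕄 := Nat.nth_mem_of_infinite h𝕄
  obtain ⟨𝕄', h𝕄', h⟩ := hQ k (fun p => g fun i => e (p i)) fun p q hp hq hpq =>
    hg _ _ (he.comp hp) (he.comp hq) (fun _ => he𝕄 _) (fun _ => he𝕄 _)
      (hpq.comp_monotone he.monotone)
  exact ⟨e '' 𝕄', Set.image_subset_iff.mpr fun n _ => he𝕄 n, h𝕄'.image he.injective.injOn,
    SeparatedDistLE.image_of_strictMono he h⟩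

end SeparatedDist

theorem separatedInf_lt_of_coarse_solvent {X Y : Type*} [SeminormedAddCommGroup X]
    [NormedSpace ℝ X] [PseudoMetricSpace Y] {φ : X → Y} {ε' δ' R w ε : ℝ}
    (hQ : PropertyQED Y ε' δ') (hφ_coarse : ∀ x y, dist x y ≤ 1 → dist (φ x) (φ y) ≤ δ')
    (hφ_solvent : ∀ x y, dist x y ∈ Set.Icc R (R + w) → ε' < dist (φ x) (φ y))
    (hR : 0 < R) (hw : 0 < w) (hε : 0 < ε) {k : ℕ} {f : (Fin k → ℕ) → X}
    (hf : ∀ nb mb : Fin k → ℕ, StrictMono nb → StrictMono mb → Interlace nb mb →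
      dist (f nb) (f mb) ≤ (R + w)⁻¹ * ε) :
    separatedInf f < ε := by
  by_contra! hεL
  set L := separatedInf f
  have hL : 0 < L := hε.trans_le hεL
  set s := (R + w / 2) / L
  have hs : 0 < s := by positivity
  set η := w / (2 * s)
  have hη : 0 < η := by positivity
  have hsL : s * L = R + w / 2 := div_mul_cancel₀ _ hL.ne'
  have hsη : s * η = w / 2 := by simp only [η]; field_simp
  obtain ⟨M₀, hM₀, hM₀L⟩ := exists_separatedDistLE_of_separatedInf_lt hf (lt_add_of_pos_right L hη)
  set g : (Fin k → ℕ) → Y := fun p => φ (s • f p)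
  have hg : ∀ nb mb : Fin k → ℕ, StrictMono nb → StrictMono mb → Interlace nb mb →
      dist (g nb) (g mb) ≤ δ' := by
    intro nb mb hnb hmb hnm
    refine hφ_coarse _ _ ?_
    rw [dist_smul₀, Real.norm_of_nonneg hs.le]
    calc s * dist (f nb) (f mb) ≤ s * ((R + w)⁻¹ * ε) :=
          mul_le_mul_of_nonneg_left (hf _ _ hnb hmb hnm) hs.le
      _ = (R + w / 2) / (R + w) * (ε / L) := by simp only [s]; field_simp
      _ ≤ 1 := mul_le_one₀ ((div_le_one (by positivity)).mpr (by linarith)) (by positivity)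
          ((div_le_one hL).mpr hεL)
  obtain ⟨E, hEM₀, hE, hEg⟩ := hQ.exists_subset_separatedDistLE hM₀
    fun nb mb hnb hmb _ _ hnm => hg nb mb hnb hmb hnm
  have hEf : SeparatedDistLE f E (L + η) := hM₀L.mono hEM₀ le_rfl
  obtain ⟨nb, mb, hnb, hmb, hn, hm, hsep, hfar⟩ : ∃ nb mb : Fin k → ℕ, StrictMono nb ∧
      StrictMono mb ∧ (∀ i, nb i ∈ E) ∧ (∀ i, mb i ∈ E) ∧
      (∀ i j, nb i < mb j) ∧ L - η < dist (f nb) (f mb) := by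
    simpa [SeparatedDistLE] using not_separatedDistLE_of_lt_separatedInf hE (sub_lt_self L hη)
  have hnear := hEf nb mb hnb hmb hn hm hsep
  have hwindow : dist (s • f nb) (s • f mb) ∈ Set.Icc R (R + w) := by
    rw [dist_smul₀, Real.norm_of_nonneg hs.le]
    have hlow := mul_le_mul_of_nonneg_left hfar.le hs.le
    have hhigh := mul_le_mul_of_nonneg_left hnear hs.le
    rw [mul_sub] at hlow
    rw [mul_add] at hhigh
    constructor <;> linarith
  exact (hφ_solvent _ _ hwindow).not_ge (hEg nb mb hnb hmb hn hm hsep)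

theorem propertyQ_of_coarse_solvent_general
    {X Y : Type*} [NormedAddCommGroup X] [NormedSpace ℝ X]
    [NormedAddCommGroup Y]
    (hY : PropertyQ Y) (φ : X → Y) (h1 : Coarse φ) (h2 : Solvent φ) :
    PropertyQ X := by
  obtain ⟨c, hc, hQY⟩ := hY
  obtain ⟨C, hC⟩ := h1 1
  set ε' := max C 1 / c
  have hε' : 0 < ε' := by positivity
  have hcε' : c * ε' = max C 1 := mul_div_cancel₀ _ hc.ne'
  obtain ⟨n, hn⟩ := exists_nat_gt ε'
  obtain ⟨R, hR, hsolvent⟩ := h2 n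
  refine ⟨(R + n)⁻¹, by positivity, fun ε hε k f hf => ?_⟩
  have hfε := separatedInf_lt_of_coarse_solvent (hQY ε' hε')
    (fun x y hxy => (hC x y hxy).trans (hcε' ▸ le_max_left C 1))
    (fun x y hxy => hn.trans (hsolvent x y hxy)) hR (hε'.trans hn) hε hf
  exact exists_separatedDistLE_of_separatedInf_lt hf hfε

/-- If Y has Property 𝒬 and there is a coarse solvent map X → Y, then X has Property 𝒬. -/
theorem propertyQ_of_coarse_solvent
    {X Y : Type*} [NormedAddCommGroup X] [NormedSpace ℝ X] [CompleteSpace X]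
    [NormedAddCommGroup Y] [NormedSpace ℝ Y] [CompleteSpace Y]
    (hY : PropertyQ Y) (φ : X → Y) (h1 : Coarse φ) (h2 : Solvent φ) :
    PropertyQ X :=
  propertyQ_of_coarse_solvent_general hY φ h1 h2
end

section
/- Let M and N be Banach spaces, δ > 0, and let S ⊆ M be a δ-dense subset, i.e., dist(x, S) < δ for every x ∈ M. If f : M → N is a coarse map whose restriction f|_S to S is solvent, then f is solvent. -/
open Metric
open scoped ENNReal NNReal

section

variable {M N : Type*} [PseudoMetricSpace M] [PseudoMetricSpace N]

theorem Coarse.exists_dist_le_add_of_near {f : M → N} (hf : Coarse f) (δ : ℝ) :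
    ∃ C : ℝ, ∀ x y x' y' : M, dist x x' ≤ δ → dist y y' ≤ δ →
      dist (f x') (f y') ≤ dist (f x) (f y) + 2 * C := by
  obtain ⟨C, hC⟩ := hf δ
  refine ⟨C, fun x y x' y' hx hy => ?_⟩
  calc dist (f x') (f y') ≤ dist (f x') (f x) + dist (f x) (f y) + dist (f y) (f y') :=
        dist_triangle4 _ _ _ _
    _ ≤ C + dist (f x) (f y) + C := by
        gcongr
        · exact hC _ _ (by rwa [dist_comm])
        · exact hC _ _ hy
    _ = dist (f x) (f y) + 2 * C := by ring

/-- Moving both points by at most `δ` changes distances by at most `2δ` in the source and, by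
coarseness, by a bounded amount in the target; a solvency window for `f|_S` that is `2C + 4δ`
wider than needed therefore absorbs both errors. -/
theorem Solvent.of_domRestrict_of_near {S : Set M} {δ : ℝ} (hδ : 0 ≤ δ)
    (hS : ∀ x : M, ∃ s ∈ S, dist x s ≤ δ) {f : M → N} (hf : Coarse f)
    (hsol : Solvent (S.domRestrict f)) : Solvent f := by
  intro n
  obtain ⟨C, hC⟩ := hf.exists_dist_le_add_of_near δ
  obtain ⟨R, hR, hRsol⟩ := hsol (n + ⌈2 * C + 4 * δ⌉₊)
  refine ⟨R + 2 * δ, by linarith, fun x y hxy => ?_⟩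
  obtain ⟨s, hs, hxs⟩ := hS x
  obtain ⟨t, ht, hyt⟩ := hS y
  have hst := dist_dist_dist_le x y s t
  rw [Real.dist_eq, abs_le] at hst
  have hC_nonneg : 0 ≤ C := by
    linarith [hC x y x y (by rwa [dist_self]) (by rwa [dist_self])]
  have hceil := Nat.le_ceil (2 * C + 4 * δ)
  have hst_mem : dist s t ∈ Set.Icc R (R + ↑(n + ⌈2 * C + 4 * δ⌉₊)) := by
    push_cast
    constructor <;> linarith [hxy.1, hxy.2]
  have hsol_st := hRsol ⟨s, hs⟩ ⟨t, ht⟩ hst_mem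
  simp only [Set.domRestrict_apply, Nat.cast_add] at hsol_st
  linarith [hC x y s t hxs hyt]

end

theorem solvent_of_solvent_on_dense_general
    {M N : Type*} [NormedAddCommGroup M]
    [NormedAddCommGroup N]
    (δ : ℝ) (hδ : 0 < δ) (S : Set M) (hS : ∀ x : M, ∃ s ∈ S, dist x s < δ)
    (f : M → N) (hf : Coarse f)
    (hsol : ∀ n : ℕ, ∃ R : ℝ, 0 < R ∧ ∀ x ∈ S, ∀ y ∈ S,
      dist x y ∈ Set.Icc R (R + (n : ℝ)) → (n : ℝ) < dist (f x) (f y)) :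
    Solvent f := by
  have hsol_S : Solvent (S.domRestrict f) := fun n => by
    obtain ⟨R, hR, hRsol⟩ := hsol n
    exact ⟨R, hR, fun x y => hRsol x x.2 y y.2⟩
  refine Solvent.of_domRestrict_of_near hδ.le (fun x => ?_) hf hsol_S
  obtain ⟨s, hs, hxs⟩ := hS x
  exact ⟨s, hs, hxs.le⟩

/-- If S is δ-dense in M and f : M → N is coarse with solvent restriction to S,
then f is solvent. -/
theorem solvent_of_solvent_on_dense
    {M N : Type*} [NormedAddCommGroup M] [NormedSpace ℝ M] [CompleteSpace M]
    [NormedAddCommGroup N] [NormedSpace ℝ N] [CompleteSpace N]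
    (δ : ℝ) (hδ : 0 < δ) (S : Set M) (hS : ∀ x : M, ∃ s ∈ S, dist x s < δ)
    (f : M → N) (hf : Coarse f)
    (hsol : ∀ n : ℕ, ∃ R : ℝ, 0 < R ∧ ∀ x ∈ S, ∀ y ∈ S,
      dist x y ∈ Set.Icc R (R + (n : ℝ)) → (n : ℝ) < dist (f x) (f y)) :
    Solvent f :=
  solvent_of_solvent_on_dense_general δ hδ S hS f hf hsol
end

section
/- Let X be a Banach space. If there exists a coarse solvent map X → ℓ_∞, then X Lipschitz embeds into ℓ_∞, i.e., there exist a map F : X → ℓ_∞ and constants c, C > 0 such that c‖x−y‖ ≤ ‖F(x) − F(y)‖ ≤ C‖x−y‖ for all x,y ∈ X. -/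
/-!
On a normed space, coarseness upgrades to a large-scale Lipschitz bound
`dist (f x) (f y) ≤ L ‖x - y‖ + B`, and a coordinatewise infimal convolution replaces `f` by an
`L`-Lipschitz map `g` into `ℓ_∞` within distance `B` of `f`. Then `g` is still solvent:
`‖g a - g b‖ > 1` whenever `‖a - b‖ ∈ [R, R + n]`. The rescalings `q⁻¹ (g (q x) - g 0)`,
`q ∈ ℚ`, are all `L`-Lipschitz, and for `x ≠ y` some `q` puts `q ‖x - y‖` into `[R, R + n]`,
so that rescaling separates `x` and `y` by at least `‖x - y‖ / (R + n)`. Amalgamating these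
countably many maps into `ℓ_∞` yields one bi-Lipschitz map into `ℓ_∞`.
-/

open Metric
open scoped ENNReal NNReal

section LinftyDist

variable {ι : Type*}

theorem linfty_dist_apply_le (u v : lp (fun _ : ι => ℝ) ∞) (i : ι) :
    dist (u i) (v i) ≤ dist u v :=
  (lp.lipschitzWith_one_eval ∞ i).dist_le_mul u v |>.trans_eq (one_mul _)

theorem linfty_dist_le_of_forall {u v : lp (fun _ : ι => ℝ) ∞} {C : ℝ} (hC : 0 ≤ C)
    (h : ∀ i, dist (u i) (v i) ≤ C) : dist u v ≤ C := by
  rw [dist_eq_norm]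
  refine lp.norm_le_of_forall_le hC fun i => ?_
  simpa only [lp.coeFn_sub, Pi.sub_apply, ← dist_eq_norm] using h i

end LinftyDist

theorem dist_le_mul_add_of_dist_le_one {E N : Type*} [NormedAddCommGroup E] [NormedSpace ℝ E]
    [PseudoMetricSpace N] {f : E → N} {C : ℝ}
    (hf : ∀ x y, dist x y ≤ 1 → dist (f x) (f y) ≤ C) (x y : E) :
    dist (f x) (f y) ≤ C * dist x y + 2 * C := by
  set n := ⌈dist x y⌉₊ + 1
  have hn : (0 : ℝ) < n := by positivity
  have hdn : dist x y ≤ n - 1 := by simpa [n] using Nat.le_ceil (dist x y)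
  have hnd : (n : ℝ) ≤ dist x y + 2 := by
    simp only [n, Nat.cast_add, Nat.cast_one]
    linarith [Nat.ceil_lt_add_one (dist_nonneg (x := x) (y := y))]
  set p : ℕ → E := fun i => AffineMap.lineMap x y ((i : ℝ) / n)
  have hstep : ∀ i, dist (f (p i)) (f (p (i + 1))) ≤ C := fun i => hf _ _ <| by
    simp only [p, dist_lineMap_lineMap, Real.dist_eq, Nat.cast_add, Nat.cast_one, add_div,
      sub_add_cancel_left, abs_neg, abs_div, abs_one, abs_of_pos hn]
    rw [one_div_mul_eq_div, div_le_one hn]; linarith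
  have hC : 0 ≤ C := dist_nonneg.trans (hstep 0)
  calc dist (f x) (f y) = dist (f (p 0)) (f (p n)) := by simp [p, hn.ne']
    _ ≤ ∑ i ∈ Finset.range n, dist (f (p i)) (f (p (i + 1))) :=
        dist_le_range_sum_dist (f ∘ p) n
    _ ≤ ∑ _i ∈ Finset.range n, C := Finset.sum_le_sum fun i _ => hstep i
    _ = n * C := by simp
    _ ≤ (dist x y + 2) * C := mul_le_mul_of_nonneg_right hnd hC
    _ = C * dist x y + 2 * C := by ring

theorem Coarse.exists_dist_le_mul_add {E N : Type*} [NormedAddCommGroup E] [NormedSpace ℝ E]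
    [PseudoMetricSpace N] {f : E → N} (hf : Coarse f) :
    ∃ (L : ℝ≥0) (B : ℝ), ∀ x y, dist (f x) (f y) ≤ L * dist x y + B := by
  obtain ⟨C, hC⟩ := hf 1
  have hC0 : 0 ≤ C := dist_nonneg.trans (hC 0 0 (by simp))
  exact ⟨⟨C, hC0⟩, 2 * C, dist_le_mul_add_of_dist_le_one hC⟩

theorem exists_lipschitzWith_le_le_add {X : Type*} [PseudoMetricSpace X] {h : X → ℝ}
    {L : ℝ≥0} {B : ℝ} (hh : ∀ x z, h x ≤ h z + L * dist x z + B) :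
    ∃ u : X → ℝ, LipschitzWith L u ∧ ∀ x, u x ≤ h x ∧ h x ≤ u x + B := by
  have hbdd : ∀ x, BddBelow (Set.range fun z => h z + L * dist x z) := fun x =>
    ⟨h x - B, by rintro _ ⟨z, rfl⟩; linarith [hh x z]⟩
  refine ⟨fun x => ⨅ z, h z + L * dist x z, LipschitzWith.of_le_add_mul L fun x y => ?_,
    fun x => ⟨?_, ?_⟩⟩
  · have : Nonempty X := ⟨y⟩
    rw [← sub_le_iff_le_add]
    refine le_ciInf fun z => ?_
    have := ciInf_le (hbdd x) z
    nlinarith [dist_triangle x y z, L.coe_nonneg]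
  · simpa using ciInf_le (hbdd x) x
  · have : Nonempty X := ⟨x⟩
    rw [← sub_le_iff_le_add]
    exact le_ciInf fun z => by linarith [hh x z]

theorem exists_lipschitzWith_linfty_dist_le {X ι : Type*} [PseudoMetricSpace X]
    {f : X → lp (fun _ : ι => ℝ) ∞} {L : ℝ≥0} {B : ℝ}
    (hf : ∀ x y, dist (f x) (f y) ≤ L * dist x y + B) :
    ∃ g : X → lp (fun _ : ι => ℝ) ∞, LipschitzWith L g ∧
      ∀ x, dist (f x) (g x) ≤ B := by
  have hcoord : ∀ i x z, f x i ≤ f z i + L * dist x z + B := fun i x z => by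
    linarith [Real.sub_le_dist (f x i) (f z i), linfty_dist_apply_le (f x) (f z) i, hf x z]
  choose u hu hfu using fun i => exists_lipschitzWith_le_le_add (hcoord i)
  have hclose : ∀ x i, dist (f x i) (u i x) ≤ B := fun x i => by
    rw [Real.dist_eq, abs_le]; constructor <;> linarith [hfu i x]
  have hB : ∀ x : X, 0 ≤ B := fun x => by simpa using hf x x
  have hmem : ∀ x, Memℓp (fun i => u i x) ∞ := fun x => memℓp_infty
    ⟨‖f x‖ + B, Set.forall_mem_range.2 fun i => by
      have hfx := abs_le.mp (lp.norm_apply_le_norm ENNReal.top_ne_zero (f x) i)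
      rw [Real.norm_eq_abs (u i x), abs_le]
      constructor <;> linarith [hfu i x]⟩
  refine ⟨fun x => ⟨_, hmem x⟩, LipschitzWith.of_dist_le_mul fun x y => ?_,
    fun x => linfty_dist_le_of_forall (hB x) (hclose x)⟩
  exact linfty_dist_le_of_forall (by positivity) fun i => (hu i).dist_le_mul x y

section Rescale

variable {E F : Type*} [NormedAddCommGroup E] [NormedSpace ℝ E] [NormedAddCommGroup F]
  [NormedSpace ℝ F]

noncomputable def rescale (g : E → F) (t : ℝ) (x : E) : F :=
  t⁻¹ • (g (t • x) - g 0)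

@[simp]
theorem rescale_zero (g : E → F) (t : ℝ) : rescale g t 0 = 0 := by
  simp [rescale]

theorem dist_rescale (g : E → F) (t : ℝ) (x y : E) :
    dist (rescale g t x) (rescale g t y) = |t|⁻¹ * dist (g (t • x)) (g (t • y)) := by
  rw [rescale, rescale, dist_smul₀, Real.norm_eq_abs, abs_inv, dist_sub_right]

theorem LipschitzWith.rescale {g : E → F} {L : ℝ≥0} (hg : LipschitzWith L g) (t : ℝ) :
    LipschitzWith L (rescale g t) := by
  refine LipschitzWith.of_dist_le_mul fun x y => ?_
  rw [dist_rescale]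
  rcases eq_or_ne t 0 with rfl | ht
  · simp only [abs_zero, inv_zero, zero_mul]; positivity
  calc |t|⁻¹ * dist (g (t • x)) (g (t • y)) ≤ |t|⁻¹ * (L * (|t| * dist x y)) := by
        gcongr
        simpa [dist_smul₀] using hg.dist_le_mul (t • x) (t • y)
    _ = L * dist x y := by field_simp

theorem exists_rat_div_le_dist_rescale {g : E → F} {R n : ℝ} (hR : 0 < R) (hn : 0 < n)
    (hg : ∀ a b, dist a b ∈ Set.Icc R (R + n) → 1 < dist (g a) (g b)) (x y : E) :
    ∃ q : ℚ, dist x y / (R + n) ≤ dist (rescale g q x) (rescale g q y) := by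
  rcases eq_or_ne x y with rfl | hxy
  · exact ⟨0, by simp⟩
  have hd : 0 < dist x y := dist_pos.2 hxy
  obtain ⟨q, hRq, hqRn⟩ :=
    exists_rat_btwn (div_lt_div_of_pos_right (lt_add_of_pos_right R hn) hd)
  have hq : (0 : ℝ) < q := (div_pos hR hd).trans hRq
  have hscaled : dist ((q : ℝ) • x) ((q : ℝ) • y) = q * dist x y := by
    rw [dist_smul₀, Real.norm_of_nonneg hq.le]
  have hgq : 1 < dist (g ((q : ℝ) • x)) (g ((q : ℝ) • y)) :=
    hg _ _ (hscaled ▸ ⟨(div_le_iff₀ hd).1 hRq.le, ((lt_div_iff₀ hd).1 hqRn).le⟩)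
  refine ⟨q, ?_⟩
  rw [dist_rescale, abs_of_pos hq]
  calc dist x y / (R + n) ≤ (q : ℝ)⁻¹ := by
        rw [div_le_iff₀ (by positivity), inv_mul_eq_div, le_div_iff₀ hq]
        linarith [(lt_div_iff₀ hd).1 hqRn]
    _ ≤ (q : ℝ)⁻¹ * dist (g ((q : ℝ) • x)) (g ((q : ℝ) • y)) :=
        le_mul_of_one_le_right (by positivity) hgq.le

end Rescale

theorem exists_lipschitzWith_linfty_forall_dist_le {X ι κ : Type*} [PseudoMetricSpace X]
    [Countable ι] [Nonempty ι] [Countable κ] [Nonempty κ]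
    {G : ι → X → lp (fun _ : κ => ℝ) ∞} {L : ℝ≥0} (hG : ∀ i, LipschitzWith L (G i)) {x₀ : X}
    (hx₀ : ∀ i, G i x₀ = 0) :
    ∃ F : X → lp (fun _ : ℕ => ℝ) ∞, LipschitzWith L F ∧
      ∀ i x y, dist (G i x) (G i y) ≤ dist (F x) (F y) := by
  obtain ⟨s, hs⟩ := exists_surjective_nat (ι × κ)
  have hmem : ∀ x, Memℓp (fun m => G (s m).1 x (s m).2) ∞ := fun x => memℓp_infty
    ⟨L * dist x x₀, Set.forall_mem_range.2 fun m => by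
      simpa [hx₀] using (linfty_dist_apply_le (G (s m).1 x) (G (s m).1 x₀) (s m).2).trans
        ((hG (s m).1).dist_le_mul x x₀)⟩
  refine ⟨fun x => ⟨_, hmem x⟩, LipschitzWith.of_dist_le_mul fun x y =>
    linfty_dist_le_of_forall (by positivity) fun m =>
      (linfty_dist_apply_le (G (s m).1 x) _ _).trans ((hG (s m).1).dist_le_mul x y),
    fun i x y => linfty_dist_le_of_forall dist_nonneg fun k => ?_⟩
  obtain ⟨m, hm⟩ := hs (i, k)
  simpa [hm] using linfty_dist_apply_le (⟨_, hmem x⟩ : lp _ ∞) ⟨_, hmem y⟩ m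

theorem lipschitz_embeds_into_linfty_of_coarse_solvent_general
    {X : Type*} [NormedAddCommGroup X] [NormedSpace ℝ X]
    (f : X → lp (fun _ : ℕ => ℝ) ⊤) (h1 : Coarse f) (h2 : Solvent f) :
    ∃ (F : X → lp (fun _ : ℕ => ℝ) ⊤) (c C : ℝ), 0 < c ∧ 0 < C ∧
      ∀ x y : X, c * ‖x - y‖ ≤ ‖F x - F y‖ ∧ ‖F x - F y‖ ≤ C * ‖x - y‖ := by
  obtain ⟨L, B, hfL⟩ := h1.exists_dist_le_mul_add
  obtain ⟨g, hg, hfg⟩ := exists_lipschitzWith_linfty_dist_le hfL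
  obtain ⟨R, hR, hfR⟩ := h2 (⌈2 * B⌉₊ + 1)
  set n : ℝ := ((⌈2 * B⌉₊ + 1 : ℕ) : ℝ)
  have hn : 2 * B + 1 ≤ n := by
    simp only [n, Nat.cast_add, Nat.cast_one]; linarith [Nat.le_ceil (2 * B)]
  have hgR : ∀ a b, dist a b ∈ Set.Icc R (R + n) → 1 < dist (g a) (g b) := fun a b hab => by
    linarith [dist_triangle4 (f a) (g a) (g b) (f b), hfR a b hab, hfg a, hfg b,
      dist_comm (f b) (g b)]
  obtain ⟨F, hF, hFge⟩ := exists_lipschitzWith_linfty_forall_dist_le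
    (fun q : ℚ => hg.rescale q) fun q => rescale_zero g q
  refine ⟨F, 1 / (R + n), L + 1, by positivity, by positivity, fun x y => ?_⟩
  simp only [← dist_eq_norm, one_div_mul_eq_div]
  obtain ⟨q, hq⟩ := exists_rat_div_le_dist_rescale hR (by positivity) hgR x y
  refine ⟨hq.trans (hFge q x y), (hF.dist_le_mul x y).trans ?_⟩
  gcongr
  linarith

/-- If there is a coarse solvent map X → ℓ_∞, then X Lipschitz embeds into ℓ_∞. -/
theorem lipschitz_embeds_into_linfty_of_coarse_solvent
    {X : Type*} [NormedAddCommGroup X] [NormedSpace ℝ X] [CompleteSpace X]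
    (f : X → lp (fun _ : ℕ => ℝ) ⊤) (h1 : Coarse f) (h2 : Solvent f) :
    ∃ (F : X → lp (fun _ : ℕ => ℝ) ⊤) (c C : ℝ), 0 < c ∧ 0 < C ∧
      ∀ x y : X, c * ‖x - y‖ ≤ ‖F x - F y‖ ∧ ‖F x - F y‖ ≤ C * ‖x - y‖ :=
  lipschitz_embeds_into_linfty_of_coarse_solvent_general f h1 h2
end

section
/- Let X be a Banach space. If there exists a uniformly continuous almost uncollapsed map X → ℓ_∞, then X Lipschitz embeds into ℓ_∞, i.e., there exist a map F : X → ℓ_∞ and constants c, C > 0 such that c‖x−y‖ ≤ ‖F(x) − F(y)‖ ≤ C‖x−y‖ for all x,y ∈ X. -/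
open Metric
open scoped ENNReal NNReal

section InfConv

variable {Y : Type*} [PseudoMetricSpace Y]

/-- Inf-convolution of `u` with `L * dist`. -/
noncomputable def infConv (u : Y → ℝ) (L : ℝ) (x : Y) : ℝ :=
  ⨅ z : Y, (u z + L * dist x z)

variable {u : Y → ℝ} {L B : ℝ}

lemma infConv_bddBelow (hu : ∀ a b : Y, |u a - u b| ≤ L * dist a b + B) (x : Y) :
    BddBelow (Set.range fun z => u z + L * dist x z) := by
  refine ⟨u x - B, ?_⟩
  rintro r ⟨z, rfl⟩
  show u x - B ≤ u z + L * dist x z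
  have h1 : u x - u z ≤ L * dist x z + B := (le_abs_self _).trans (hu x z)
  linarith

lemma infConv_le_self (hu : ∀ a b : Y, |u a - u b| ≤ L * dist a b + B) (x : Y) :
    infConv u L x ≤ u x := by
  have := ciInf_le (infConv_bddBelow hu x) x
  simpa [infConv] using this

lemma self_le_infConv (hu : ∀ a b : Y, |u a - u b| ≤ L * dist a b + B) (x : Y) :
    u x - B ≤ infConv u L x := by
  haveI : Nonempty Y := ⟨x⟩
  refine le_ciInf fun z => ?_
  have h1 : u x - u z ≤ L * dist x z + B := (le_abs_self _).trans (hu x z)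
  linarith

lemma infConv_lipschitz (hu : ∀ a b : Y, |u a - u b| ≤ L * dist a b + B) (hL : 0 ≤ L)
    (x y : Y) : |infConv u L x - infConv u L y| ≤ L * dist x y := by
  haveI : Nonempty Y := ⟨x⟩
  have key : ∀ p q : Y, infConv u L p ≤ infConv u L q + L * dist p q := by
    intro p q
    rw [← sub_le_iff_le_add]
    refine le_ciInf fun z => ?_
    have h1 : infConv u L p ≤ u z + L * dist p z := ciInf_le (infConv_bddBelow hu p) z
    have h2 : dist p z ≤ dist p q + dist q z := dist_triangle _ _ _
    nlinarith [mul_le_mul_of_nonneg_left h2 hL]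
  rw [abs_sub_le_iff]
  constructor
  · have := key x y; linarith
  · have := key y x; rw [dist_comm y x] at this; linarith

end InfConv

section Chain

variable {X : Type*} [NormedAddCommGroup X] [NormedSpace ℝ X]
variable {Y : Type*} [PseudoMetricSpace Y]

lemma chain_bound (f : X → Y) {δ ε : ℝ} (hδ : 0 < δ) (hε : 0 ≤ ε)
    (h : ∀ a b : X, dist a b < δ → dist (f a) (f b) ≤ ε) (u v : X) :
    dist (f u) (f v) ≤ (2 * ε / δ) * dist u v + ε := by
  set d := dist u v with hd
  have hd0 : 0 ≤ d := dist_nonneg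
  set n : ℕ := ⌊d / (δ / 2)⌋₊ + 1 with hn
  have hn0 : 0 < (n : ℝ) := by positivity
  have hfloor : d / (δ / 2) < (n : ℝ) := by
    have := Nat.lt_floor_add_one (d / (δ / 2))
    push_cast [hn]
    linarith
  have hstep : d / n < δ / 2 := by
    rw [div_lt_iff₀ hn0]
    have := mul_lt_mul_of_pos_right hfloor (show (0:ℝ) < δ / 2 by linarith)
    calc d = d / (δ / 2) * (δ / 2) := by field_simp
      _ < (n : ℝ) * (δ / 2) := this
      _ = δ / 2 * n := by ring
  set w : ℕ → X := fun i => u + ((i : ℝ) / n) • (v - u) with hw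
  have hw0 : w 0 = u := by simp [hw]
  have hwn : w n = v := by
    simp only [hw]
    rw [div_self (ne_of_gt hn0), one_smul]
    abel
  have hstep' : ∀ i : ℕ, dist (w i) (w (i + 1)) = d / n := by
    intro i
    have e1 : w (i + 1) - w i = (((i : ℝ) + 1) / n - (i : ℝ) / n) • (v - u) := by
      simp only [hw]
      rw [add_sub_add_left_eq_sub, ← sub_smul]
      push_cast
      ring_nf
    have e2 : ((i : ℝ) + 1) / n - (i : ℝ) / n = 1 / n := by field_simp; ring
    rw [dist_eq_norm', e1, e2, norm_smul]
    rw [Real.norm_eq_abs, abs_of_pos (by positivity : (0:ℝ) < 1 / (n:ℝ))]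
    rw [norm_sub_rev, ← dist_eq_norm, ← hd]
    ring
  have hsum : dist (f u) (f v) ≤ (n : ℝ) * ε := by
    calc dist (f u) (f v) = dist (f (w 0)) (f (w n)) := by rw [hw0, hwn]
      _ ≤ ∑ i ∈ Finset.range n, dist (f (w i)) (f (w (i + 1))) :=
          dist_le_range_sum_dist (fun i => f (w i)) n
      _ ≤ ∑ _i ∈ Finset.range n, ε := by
          refine Finset.sum_le_sum fun i _ => h _ _ ?_
          rw [hstep' i]; linarith
      _ = (n : ℝ) * ε := by simp [mul_comm]
  have hnle : (n : ℝ) ≤ d / (δ / 2) + 1 := by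
    have := Nat.floor_le (show (0:ℝ) ≤ d / (δ / 2) by positivity)
    push_cast [hn]
    linarith
  calc dist (f u) (f v) ≤ (n : ℝ) * ε := hsum
    _ ≤ (d / (δ / 2) + 1) * ε := mul_le_mul_of_nonneg_right hnle hε
    _ = (2 * ε / δ) * d + ε := by field_simp

end Chain
open Metric

section Scaled

variable {X : Type*} [NormedAddCommGroup X] [NormedSpace ℝ X]

/-- Coordinate of the rescaled map: `a * (f (a⁻¹ • x))ₙ`. -/
noncomputable def uAux (f : X → lp (fun _ : ℕ => ℝ) ⊤) (a : ℝ) (n : ℕ) (x : X) : ℝ :=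
  a * (f (a⁻¹ • x) n)

/-- Lipschitz-ized coordinate via inf-convolution. -/
noncomputable def gAux (f : X → lp (fun _ : ℕ => ℝ) ⊤) (L a : ℝ) (n : ℕ) (x : X) : ℝ :=
  infConv (uAux f a n) L x

/-- All scales assembled, as a bare function `ℕ → ℝ`. -/
noncomputable def FAux (f : X → lp (fun _ : ℕ => ℝ) ⊤) (L : ℝ) (x : X) : ℕ → ℝ :=
  fun m =>
    let p := (Denumerable.eqv (ℚ × ℕ)).symm m
    if 0 < ((p.1 : ℝ)) then gAux f L (p.1 : ℝ) p.2 x - gAux f L (p.1 : ℝ) p.2 0 else 0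

variable (f : X → lp (fun _ : ℕ => ℝ) ⊤) {L B a : ℝ}

lemma uAux_bound (hf : ∀ u v : X, dist (f u) (f v) ≤ L * dist u v + B) (ha : 0 < a)
    (n : ℕ) (x y : X) : |uAux f a n x - uAux f a n y| ≤ L * dist x y + a * B := by
  have hsub : uAux f a n x - uAux f a n y
      = a * ((f (a⁻¹ • x) - f (a⁻¹ • y)) n) := by
    rw [lp.coeFn_sub, Pi.sub_apply]
    simp [uAux]
    ring
  have hcoord : |(f (a⁻¹ • x) - f (a⁻¹ • y)) n| ≤ ‖f (a⁻¹ • x) - f (a⁻¹ • y)‖ := by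
    have := lp.norm_apply_le_norm (ENNReal.top_ne_zero) (f (a⁻¹ • x) - f (a⁻¹ • y)) n
    rwa [Real.norm_eq_abs] at this
  have hdist : dist (a⁻¹ • x) (a⁻¹ • y) = a⁻¹ * dist x y := by
    rw [dist_smul₀, Real.norm_eq_abs, abs_of_pos (by positivity)]
  have hnorm : ‖f (a⁻¹ • x) - f (a⁻¹ • y)‖ ≤ L * (a⁻¹ * dist x y) + B := by
    rw [← hdist, ← dist_eq_norm]
    exact hf _ _
  rw [hsub, abs_mul, abs_of_pos ha]
  calc a * |(f (a⁻¹ • x) - f (a⁻¹ • y)) n| ≤ a * (L * (a⁻¹ * dist x y) + B) := by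
        exact mul_le_mul_of_nonneg_left (hcoord.trans hnorm) ha.le
    _ = L * dist x y + a * B := by field_simp

lemma gAux_lipschitz (hf : ∀ u v : X, dist (f u) (f v) ≤ L * dist u v + B) (hL : 0 ≤ L)
    (ha : 0 < a) (n : ℕ) (x y : X) :
    |gAux f L a n x - gAux f L a n y| ≤ L * dist x y :=
  infConv_lipschitz (uAux_bound f hf ha n) hL x y

lemma gAux_close (hf : ∀ u v : X, dist (f u) (f v) ≤ L * dist u v + B) (ha : 0 < a)
    (n : ℕ) (x : X) : |gAux f L a n x - uAux f a n x| ≤ a * B := by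
  have h1 := infConv_le_self (uAux_bound f hf ha n) x
  have h2 := self_le_infConv (uAux_bound f hf ha n) x
  rw [abs_le]
  constructor <;> [skip; skip] <;> simp only [gAux] at * <;> linarith

end Scaled

set_option maxHeartbeats 2000000 in
/-- If there is a uniformly continuous almost uncollapsed map X → ℓ_∞, then X Lipschitz
embeds into ℓ_∞. -/
theorem lipschitz_embeds_into_linfty_of_uniformContinuous_almostUncollapsed
    {X : Type*} [NormedAddCommGroup X] [NormedSpace ℝ X] [CompleteSpace X]
    (f : X → lp (fun _ : ℕ => ℝ) ⊤) (h1 : UniformContinuous f) (h2 : AlmostUncollapsed f) :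
    ∃ (F : X → lp (fun _ : ℕ => ℝ) ⊤) (c C : ℝ), 0 < c ∧ 0 < C ∧
      ∀ x y : X, c * ‖x - y‖ ≤ ‖F x - F y‖ ∧ ‖F x - F y‖ ≤ C * ‖x - y‖ := by
  obtain ⟨t₀, ht₀, hρ0⟩ := h2
  have hlow : ∀ x y : X, dist x y = t₀ → exactComp f t₀ ≤ dist (f x) (f y) := by
    intro x y hxy
    apply csInf_le
    · exact ⟨0, by rintro r ⟨a, b, -, rfl⟩; exact dist_nonneg⟩
    · exact ⟨x, y, hxy, rfl⟩
  set ρ := exactComp f t₀ with hρdef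
  obtain ⟨δ, hδ, hδf⟩ := Metric.uniformContinuous_iff.mp h1 (ρ / 8) (by linarith)
  set B₀ : ℝ := ρ / 8 with hB₀
  set L₀ : ℝ := 2 * B₀ / δ with hL₀def
  have hB₀pos : 0 < B₀ := by rw [hB₀]; linarith
  have hL₀ : 0 < L₀ := by rw [hL₀def]; positivity
  have hf : ∀ u v : X, dist (f u) (f v) ≤ L₀ * dist u v + B₀ := fun u v =>
    chain_bound f hδ hB₀pos.le (fun a b hab => (hδf hab).le) u v
  clear_value ρ B₀ L₀
  -- membership in ℓ∞
  have hmem : ∀ x : X, Memℓp (FAux f L₀ x) ⊤ := by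
    intro x
    apply memℓp_infty
    refine ⟨L₀ * dist x 0, ?_⟩
    rintro r ⟨m, rfl⟩
    show ‖FAux f L₀ x m‖ ≤ L₀ * dist x 0
    rw [Real.norm_eq_abs]
    unfold FAux
    by_cases hp : 0 < ((((Denumerable.eqv (ℚ × ℕ)).symm m).1 : ℝ))
    · simp only [if_pos hp]
      exact gAux_lipschitz f hf hL₀.le hp _ x 0
    · simp only [if_neg hp, abs_zero]
      positivity
  set Flp : X → lp (fun _ : ℕ => ℝ) ⊤ := fun x => ⟨FAux f L₀ x, hmem x⟩ with hFlp
  have hFcoord : ∀ x y : X, ∀ m : ℕ,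
      (↑(Flp x - Flp y) : ∀ _ : ℕ, ℝ) m = FAux f L₀ x m - FAux f L₀ y m := by
    intro x y m
    rw [lp.coeFn_sub]
    rfl
  refine ⟨Flp, ρ / (4 * t₀), L₀, by positivity, hL₀, fun x y => ⟨?_, ?_⟩⟩
  · -- lower bound
    rcases eq_or_ne x y with rfl | hxy
    · simp only [sub_self, norm_zero, mul_zero, le_refl]
    set t := dist x y with htdef
    have ht : 0 < t := dist_pos.mpr hxy
    set θ : ℝ := min (1 / 2) (ρ / (16 * L₀ * t₀)) with hθdef
    have hθpos : 0 < θ := lt_min (by norm_num) (by positivity)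
    have hθle : θ ≤ 1 / 2 := min_le_left _ _
    have g1 : θ * (16 * L₀ * t₀) ≤ ρ :=
      (le_div_iff₀ (by positivity)).mp (min_le_right _ _)
    obtain ⟨q, hq1, hq2⟩ := exists_rat_btwn (show (1 - θ) * t / t₀ < t / t₀ by
      rw [div_lt_div_iff₀ ht₀ ht₀]
      nlinarith [mul_pos (mul_pos hθpos ht) ht₀])
    set a : ℝ := (q : ℝ) with hadef
    have hapos : 0 < a :=
      lt_trans (div_pos (by nlinarith) ht₀) hq1
    have hat : a * t₀ < t := (lt_div_iff₀ ht₀).mp hq2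
    have hat2 : (1 - θ) * t < a * t₀ := (div_lt_iff₀ ht₀).mp hq1
    set z : X := x + (a * t₀ / t) • (y - x) with hz
    have hxz : dist x z = a * t₀ := by
      rw [dist_eq_norm]
      have e : x - z = -((a * t₀ / t) • (y - x)) := by rw [hz]; abel
      rw [e, norm_neg, norm_smul, Real.norm_eq_abs,
        abs_of_pos (by positivity : (0:ℝ) < a * t₀ / t), norm_sub_rev,
        ← dist_eq_norm, ← htdef]
      field_simp
    have hzy : dist z y = t - a * t₀ := by
      rw [dist_eq_norm]
      have e : z - y = (a * t₀ / t - 1) • (y - x) := by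
        rw [hz, sub_smul, one_smul]; abel
      have hlt1 : a * t₀ / t < 1 := (div_lt_one ht).mpr hat
      rw [e, norm_smul, Real.norm_eq_abs, abs_of_neg (by linarith), norm_sub_rev,
        ← dist_eq_norm, ← htdef]
      field_simp; ring
    have hdist_scaled : dist (a⁻¹ • x) (a⁻¹ • z) = t₀ := by
      rw [dist_smul₀, Real.norm_eq_abs, abs_of_pos (inv_pos.mpr hapos), hxz]
      field_simp
    have hvnorm : ρ ≤ ‖f (a⁻¹ • x) - f (a⁻¹ • z)‖ := by
      rw [← dist_eq_norm]; exact hlow _ _ hdist_scaled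
    have hsup : ρ - B₀ < ⨆ n, ‖(f (a⁻¹ • x) - f (a⁻¹ • z)) n‖ := by
      rw [← lp.norm_eq_ciSup]; linarith
    obtain ⟨n, hn⟩ := exists_lt_of_lt_ciSup hsup
    rw [Real.norm_eq_abs] at hn
    have hu : a * (ρ - B₀) ≤ |uAux f a n x - uAux f a n z| := by
      have e : uAux f a n x - uAux f a n z = a * ((f (a⁻¹ • x) - f (a⁻¹ • z)) n) := by
        rw [lp.coeFn_sub, Pi.sub_apply, uAux, uAux]
        ring
      rw [e, abs_mul, abs_of_pos hapos]
      exact mul_le_mul_of_nonneg_left hn.le hapos.le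
    have hgx := gAux_close f hf hapos n x
    have hgz := gAux_close f hf hapos n z
    have htri : |uAux f a n x - uAux f a n z| ≤
        |gAux f L₀ a n x - gAux f L₀ a n z| + |gAux f L₀ a n x - uAux f a n x|
          + |gAux f L₀ a n z - uAux f a n z| := by
      have e : uAux f a n x - uAux f a n z =
          -(gAux f L₀ a n x - uAux f a n x) + (gAux f L₀ a n x - gAux f L₀ a n z)
            + (gAux f L₀ a n z - uAux f a n z) := by ring
      rw [e]
      calc |_| ≤ |(-(gAux f L₀ a n x - uAux f a n x) + (gAux f L₀ a n x - gAux f L₀ a n z))|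
            + |gAux f L₀ a n z - uAux f a n z| := abs_add_le _ _
        _ ≤ |(-(gAux f L₀ a n x - uAux f a n x))| + |gAux f L₀ a n x - gAux f L₀ a n z|
            + |gAux f L₀ a n z - uAux f a n z| := by
              have := abs_add_le (-(gAux f L₀ a n x - uAux f a n x))
                (gAux f L₀ a n x - gAux f L₀ a n z)
              linarith
        _ = |gAux f L₀ a n x - gAux f L₀ a n z| + |gAux f L₀ a n x - uAux f a n x|
            + |gAux f L₀ a n z - uAux f a n z| := by rw [abs_neg]; ring
    have hg1 : a * (ρ - B₀) - 2 * (a * B₀) ≤ |gAux f L₀ a n x - gAux f L₀ a n z| := by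
      linarith
    have hg2 : |gAux f L₀ a n z - gAux f L₀ a n y| ≤ L₀ * (t - a * t₀) := by
      have := gAux_lipschitz f hf hL₀.le hapos n z y
      rwa [hzy] at this
    have hg3 : a * (ρ - B₀) - 2 * (a * B₀) - L₀ * (t - a * t₀) ≤
        |gAux f L₀ a n x - gAux f L₀ a n y| := by
      have h1 := abs_sub_le (gAux f L₀ a n x) (gAux f L₀ a n y) (gAux f L₀ a n z)
      have h2 := abs_sub_comm (gAux f L₀ a n y) (gAux f L₀ a n z)
      linarith
    have hnum : ρ / (4 * t₀) * t ≤ a * (ρ - B₀) - 2 * (a * B₀) - L₀ * (t - a * t₀) := by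
      rw [hB₀, div_mul_eq_mul_div, div_le_iff₀ (by positivity : (0:ℝ) < 4 * t₀)]
      have i1 : (5 / 2) * ρ * (t / 2) ≤ (5 / 2) * ρ * (a * t₀) := by
        apply mul_le_mul_of_nonneg_left _ (by positivity : (0:ℝ) ≤ 5 / 2 * ρ)
        nlinarith
      have i2 : L₀ * (t - a * t₀) ≤ L₀ * (θ * t) := by
        apply mul_le_mul_of_nonneg_left _ hL₀.le
        nlinarith
      have i4 : θ * (16 * L₀ * t₀) * (t / 4) ≤ ρ * (t / 4) :=
        mul_le_mul_of_nonneg_right g1 (by positivity)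
      nlinarith [mul_le_mul_of_nonneg_right i2 (show (0:ℝ) ≤ 4 * t₀ by positivity)]
    set m : ℕ := Denumerable.eqv (ℚ × ℕ) (q, n) with hm
    have hcoordF : FAux f L₀ x m - FAux f L₀ y m = gAux f L₀ a n x - gAux f L₀ a n y := by
      unfold FAux
      simp only [hm, Equiv.symm_apply_apply]
      rw [if_pos hapos, if_pos hapos]
      ring
    have hle : |FAux f L₀ x m - FAux f L₀ y m| ≤ ‖Flp x - Flp y‖ := by
      have := lp.norm_apply_le_norm ENNReal.top_ne_zero (Flp x - Flp y) m
      rwa [hFcoord x y m, Real.norm_eq_abs] at this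
    rw [← dist_eq_norm, ← htdef]
    rw [hcoordF] at hle
    linarith
  · -- upper bound
    apply lp.norm_le_of_forall_le (by positivity)
    intro m
    rw [hFcoord x y m, Real.norm_eq_abs]
    unfold FAux
    by_cases hp : 0 < ((((Denumerable.eqv (ℚ × ℕ)).symm m).1 : ℝ))
    · simp only [if_pos hp]
      have := gAux_lipschitz f hf hL₀.le hp (((Denumerable.eqv (ℚ × ℕ)).symm m).2) x y
      have e : gAux f L₀ (((((Denumerable.eqv (ℚ × ℕ)).symm m)).1 : ℝ))
            ((((Denumerable.eqv (ℚ × ℕ)).symm m)).2) x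
          - gAux f L₀ (((((Denumerable.eqv (ℚ × ℕ)).symm m)).1 : ℝ))
            ((((Denumerable.eqv (ℚ × ℕ)).symm m)).2) 0
          - (gAux f L₀ (((((Denumerable.eqv (ℚ × ℕ)).symm m)).1 : ℝ))
            ((((Denumerable.eqv (ℚ × ℕ)).symm m)).2) y
          - gAux f L₀ (((((Denumerable.eqv (ℚ × ℕ)).symm m)).1 : ℝ))
            ((((Denumerable.eqv (ℚ × ℕ)).symm m)).2) 0)
          = gAux f L₀ (((((Denumerable.eqv (ℚ × ℕ)).symm m)).1 : ℝ))
            ((((Denumerable.eqv (ℚ × ℕ)).symm m)).2) x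
          - gAux f L₀ (((((Denumerable.eqv (ℚ × ℕ)).symm m)).1 : ℝ))
            ((((Denumerable.eqv (ℚ × ℕ)).symm m)).2) y := by ring
      rw [e]
      rwa [dist_eq_norm] at this
    · simp only [if_neg hp, sub_zero, sub_self, abs_zero]
      positivity
end
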